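/- arXiv:2208.04006 — 4 statements merged into one kernel-verified Lean document; each statement's English description precedes it below -/
import Mathlib

section
/- Let N ≥ 1 be an integer and f : I → ℝ of class C^N with ‖f^{(j)}‖_I ≤ M_j for all 0 ≤ j ≤ N. Let m ∈ ℕ with m + 1 ≤ N and suppose that for each 0 ≤ j ≤ m there is a point x_j ∈ I with f^{(j)}(x_j) = 0; let x_{−1} ∈ I be arbitrary. Set b_0(x_{−1}) := max_{0 ≤ j ≤ N} |f^{(j)}(x_{−1})|/(e^j·M_j), assume b_0(x_{−1}) > 0, and let j_0 := min{j ∈ ℕ : j ≥ log(1/b_0(x_{−1}))}. Then Σ_{j=0}^{m} |x_{j−1} − x_j| ≥ (1/e)·Σ_{j=j_0+1}^{m+1} 1/μ_j (a sum over an empty index range being 0). Moreover, if j_0 ≤ m then this inequality is strict. -/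
/-!
Write `b_n(t) = max_{n ≤ j ≤ N} |f⁽ʲ⁾(t)| / (eʲ M_j)`, so that `b_n ≤ e⁻ⁿ` on `I`. Expanding
`f⁽ʲ⁾` (`n ≤ j ≤ p`) by Taylor's formula to order `p - j` around `s`, and using
`M_{j+i} ≤ M_j μ_{p+1}^i`, gives `b_n(t) < max (b_n(s), e^{-(p+1)}) · exp (e μ_{p+1} |s - t|)`.
Hence moving the level `-log b_n` from `c` to `c'` inside `[p, p + 1]` costs a distance
`|s - t| > (c' - c) / (e μ_{p+1})`, and, crossing the integer levels one at a time by the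
intermediate value theorem, moving it from `c` to `c' ≤ m + 1` costs more than `G c - G c'`, where
`G` is the piecewise linear function with `G k = e⁻¹ ∑_{k < i ≤ m+1} 1/μ_i` at integers.
Since `f⁽ʳ⁾(z_r) = 0` we have `b_r(z_r) = b_{r+1}(z_r)`, so along the path `w, z_0, …, z_m` the
levels of `b_0(w), b_1(z_0), …, b_{m+1}(z_m)` form a chain from at most `j_0` up to `m + 1`, and the
length of the path is at least `G j_0`.
-/

/-- `bFun f M N n t = max_{n ≤ j ≤ N} |f^(j)(t)| / (e^j M_j)`. -/
noncomputable def bFun (f : ℝ → ℝ) (M : ℕ → ℝ) (N n : ℕ) (t : ℝ) : ℝ :=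
  sSup ((fun j => |iteratedDeriv j f t| / (Real.exp 1 ^ j * M j)) '' Set.Icc n N)

open Real Set

namespace Bang

lemma sum_range_pow_div_factorial_lt_exp {z : ℝ} (hz : 0 < z) (n : ℕ) :
    ∑ i ∈ Finset.range n, z ^ i / i.factorial < exp z :=
  calc ∑ i ∈ Finset.range n, z ^ i / i.factorial
      < ∑ i ∈ Finset.range (n + 1), z ^ i / i.factorial := by
        rw [Finset.sum_range_succ]; exact lt_add_of_pos_right _ (by positivity)
    _ ≤ exp z := sum_le_exp_of_nonneg hz.le _

lemma iteratedDeriv_iteratedDeriv {𝕜 F : Type*} [NontriviallyNormedField 𝕜]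
    [NormedAddCommGroup F] [NormedSpace 𝕜 F] (i j : ℕ) (f : 𝕜 → F) :
    iteratedDeriv i (iteratedDeriv j f) = iteratedDeriv (i + j) f := by
  simp only [iteratedDeriv_eq_iterate, Function.iterate_add_apply]

lemma _root_.ContDiffAt.iteratedDeriv_right {𝕜 F : Type*} [NontriviallyNormedField 𝕜]
    [NormedAddCommGroup F] [NormedSpace 𝕜 F] {f : 𝕜 → F} {x : 𝕜} {n m : WithTop ℕ∞}
    {i : ℕ}
    (hf : ContDiffAt 𝕜 n f x) (h : m + i ≤ n) : ContDiffAt 𝕜 m (iteratedDeriv i f) x := by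
  have : iteratedDeriv i f = fun y => iteratedFDeriv 𝕜 i f y (fun _ => 1) :=
    funext fun _ => iteratedDeriv_eq_iteratedFDeriv
  rw [this]
  exact (ContinuousMultilinearMap.apply 𝕜 (fun _ : Fin i => 𝕜) F fun _ => 1).contDiff
    |>.contDiffAt.comp x (hf.iteratedFDeriv_right h)

lemma abs_le_sum_taylor {g : ℝ → ℝ} {q : ℕ} {s t : ℝ}
    (hg : ∀ u ∈ uIcc s t, ContDiffAt ℝ (q + 1) g u) {A : ℕ → ℝ}
    (hA : ∀ i ≤ q, |iteratedDeriv i g s| ≤ A i)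
    (hA' : ∀ u ∈ uIcc s t, |iteratedDeriv (q + 1) g u| ≤ A (q + 1)) :
    |g t| ≤ ∑ i ∈ Finset.range (q + 2), A i * |t - s| ^ i / i.factorial := by
  rcases eq_or_ne s t with rfl | hst
  · simpa [Finset.sum_range_succ'] using hA 0 (Nat.zero_le q)
  obtain ⟨ξ, hξ, hrem⟩ := taylor_mean_remainder_lagrange_iteratedDeriv hst
    fun u hu => (hg u hu).contDiffWithinAt
  have hpoly : taylorWithinEval g q (uIcc s t) s t =
      ∑ i ∈ Finset.range (q + 1),
        (i.factorial : ℝ)⁻¹ * (t - s) ^ i * iteratedDeriv i g s := by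
    rw [taylor_within_apply]
    refine Finset.sum_congr rfl fun i hi => ?_
    rw [iteratedDerivWithin_eq_iteratedDeriv (uniqueDiffOn_uIcc hst)
      ((hg s left_mem_uIcc).of_le (by exact_mod_cast (Finset.mem_range.1 hi).le)) left_mem_uIcc,
      smul_eq_mul]
  rw [← add_sub_cancel (taylorWithinEval g q (uIcc s t) s t) (g t), hrem, hpoly,
    Finset.sum_range_succ _ (q + 1)]
  refine (abs_add_le _ _).trans (add_le_add ?_ ?_)
  · refine (Finset.abs_sum_le_sum_abs _ _).trans (Finset.sum_le_sum fun i hi => ?_)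
    rw [abs_mul, abs_mul, abs_inv, abs_pow, Nat.abs_cast, mul_comm, inv_mul_eq_div, mul_div_assoc]
    gcongr
    exact hA i (Nat.lt_succ_iff.1 (Finset.mem_range.1 hi))
  · rw [abs_div, abs_mul, abs_pow, Nat.abs_cast]
    gcongr
    exact hA' ξ (uIoo_subset_uIcc_self hξ)

lemma sub_le_sum_of_chain {G : ℝ → ℝ} {ℓ d : ℕ → ℝ} {K : ℕ}
    (hle : ∀ r < K, G (ℓ r) - G (ℓ (r + 1)) ≤ d r)
    (hlt : ∀ r < K, ℓ r < ℓ (r + 1) → G (ℓ r) - G (ℓ (r + 1)) < d r) :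
    G (ℓ 0) - G (ℓ K) ≤ ∑ r ∈ Finset.range K, d r ∧
      (ℓ 0 < ℓ K → G (ℓ 0) - G (ℓ K) < ∑ r ∈ Finset.range K, d r) := by
  rw [← Finset.sum_range_sub' (fun r => G (ℓ r))]
  refine ⟨Finset.sum_le_sum fun r hr => hle r (Finset.mem_range.1 hr), fun h => ?_⟩
  obtain ⟨r, hr, hℓr⟩ : ∃ r ∈ Finset.range K, ℓ r < ℓ (r + 1) := by
    by_contra! H
    have := Finset.sum_nonneg fun r hr => sub_nonneg.2 (H r hr)
    rw [Finset.sum_range_sub'] at this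
    linarith
  exact Finset.sum_lt_sum (fun r hr => hle r (Finset.mem_range.1 hr))
    ⟨r, hr, hlt r (Finset.mem_range.1 hr) hℓr⟩

section Weights

variable {μ M : ℕ → ℝ}

lemma weight_pos (hμ : ∀ j, 1 ≤ j → 0 < μ j) (hM0 : 0 < M 0)
    (hM : ∀ j, M (j + 1) = M j * μ (j + 1)) (j : ℕ) : 0 < M j := by
  induction j with
  | zero => exact hM0
  | succ j ih => rw [hM]; exact mul_pos ih (hμ _ j.succ_pos)

lemma weight_add_le (hμ : ∀ j, 1 ≤ j → 0 < μ j)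
    (hμmono : ∀ j, 1 ≤ j → μ j ≤ μ (j + 1)) (hM0 : 0 < M 0)
    (hM : ∀ j, M (j + 1) = M j * μ (j + 1)) {j i p : ℕ} (h : j + i ≤ p + 1) :
    M (j + i) ≤ M j * μ (p + 1) ^ i := by
  induction i with
  | zero => simp
  | succ i ih =>
    have hμle : μ (j + i + 1) ≤ μ (p + 1) :=
      monotoneOn_nat_Ici_of_le_succ hμmono (mem_Ici.2 (by omega)) (mem_Ici.2 (by omega))
        (by omega)
    have hMj := weight_pos hμ hM0 hM j
    have hμp := hμ (p + 1) (by omega)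
    calc M (j + (i + 1)) = M (j + i) * μ (j + i + 1) := hM _
      _ ≤ M j * μ (p + 1) ^ i * μ (p + 1) :=
        mul_le_mul (ih (by omega)) hμle (hμ _ (by omega)).le (by positivity)
      _ = M j * μ (p + 1) ^ (i + 1) := by ring

end Weights

noncomputable def scaledDeriv (f : ℝ → ℝ) (M : ℕ → ℝ) (j : ℕ) (t : ℝ) : ℝ :=
  |iteratedDeriv j f t| / (exp 1 ^ j * M j)

section ScaledDeriv

variable {f : ℝ → ℝ} {M : ℕ → ℝ} {N n j : ℕ} {t B : ℝ}

lemma scaledDeriv_nonneg (hM : 0 < M j) : 0 ≤ scaledDeriv f M j t := by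
  unfold scaledDeriv; positivity

lemma abs_iteratedDeriv_le (hM : 0 < M j) (h : scaledDeriv f M j t ≤ B) :
    |iteratedDeriv j f t| ≤ exp 1 ^ j * M j * B := by
  rw [scaledDeriv, div_le_iff₀ (by positivity)] at h
  linarith

lemma scaledDeriv_le_exp_neg (hM : 0 < M j) (h : |iteratedDeriv j f t| ≤ M j) :
    scaledDeriv f M j t ≤ exp (-j) := by
  rwa [scaledDeriv, div_le_iff₀ (by positivity), exp_one_pow, ← mul_assoc, ← exp_add,
    neg_add_cancel, exp_zero, one_mul]

lemma bFun_eq_sup' (hn : n ≤ N) (t : ℝ) :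
    bFun f M N n t = (Finset.Icc n N).sup' (Finset.nonempty_Icc.2 hn) (scaledDeriv f M · t) := by
  rw [Finset.sup'_eq_csSup_image, Finset.coe_Icc]
  rfl

lemma le_bFun (hnj : n ≤ j) (hjN : j ≤ N) : scaledDeriv f M j t ≤ bFun f M N n t := by
  rw [bFun_eq_sup' (hnj.trans hjN)]
  exact Finset.le_sup' (scaledDeriv f M · t) (Finset.mem_Icc.2 ⟨hnj, hjN⟩)

lemma bFun_le_iff (hn : n ≤ N) :
    bFun f M N n t ≤ B ↔ ∀ j ∈ Finset.Icc n N, scaledDeriv f M j t ≤ B := by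
  rw [bFun_eq_sup' hn, Finset.sup'_le_iff]

lemma bFun_lt_iff (hn : n ≤ N) :
    bFun f M N n t < B ↔ ∀ j ∈ Finset.Icc n N, scaledDeriv f M j t < B := by
  rw [bFun_eq_sup' hn, Finset.sup'_lt_iff]

lemma bFun_le_exp_neg (hM : ∀ j, 0 < M j) (hn : n ≤ N)
    (hbd : ∀ j ≤ N, |iteratedDeriv j f t| ≤ M j) : bFun f M N n t ≤ exp (-n) :=
  (bFun_le_iff hn).2 fun j hj =>
    (scaledDeriv_le_exp_neg (hM j) (hbd j (Finset.mem_Icc.1 hj).2)).trans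
      (exp_le_exp.2 (neg_le_neg (Nat.cast_le.2 (Finset.mem_Icc.1 hj).1)))

lemma bFun_eq_bFun_succ (hM : ∀ j, 0 < M j) (hn : n < N) (h0 : iteratedDeriv n f t = 0) :
    bFun f M N n t = bFun f M N (n + 1) t := by
  refine le_antisymm ((bFun_le_iff hn.le).2 fun j hj => ?_) ((bFun_le_iff hn).2 fun j hj => ?_)
  · obtain ⟨hnj, hjN⟩ := Finset.mem_Icc.1 hj
    rcases hnj.eq_or_lt with rfl | hnj
    · rw [scaledDeriv, h0, abs_zero, zero_div]
      exact (scaledDeriv_nonneg (hM _)).trans (le_bFun le_rfl hn)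
    · exact le_bFun hnj hjN
  · obtain ⟨hnj, hjN⟩ := Finset.mem_Icc.1 hj
    exact le_bFun (by omega) hjN

lemma continuousOn_bFun {s : Set ℝ} (hn : n ≤ N) (hf : ∀ u ∈ s, ContDiffAt ℝ N f u) :
    ContinuousOn (bFun f M N n) s := by
  rw [show bFun f M N n = _ from funext (bFun_eq_sup' hn)]
  refine ContinuousOn.finset_sup'_apply _ fun j hj => ContinuousOn.div_const ?_ _
  refine ContinuousOn.abs fun u hu => ?_
  refine ((hf u hu).iteratedDeriv_right (m := 0) ?_).continuousAt.continuousWithinAt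
  simpa using (Finset.mem_Icc.1 hj).2

end ScaledDeriv

section Growth

variable {μ M : ℕ → ℝ} {f : ℝ → ℝ} {N n p : ℕ} {x y s t : ℝ}

lemma sum_taylor_weights_lt (hM : ∀ j, 0 < M j)
    (hMμ : ∀ j i, j + i ≤ p + 1 → M (j + i) ≤ M j * μ (p + 1) ^ i) (hμ : 0 < μ (p + 1))
    {j : ℕ} (hjp : j ≤ p) {b d : ℝ} (hb : 0 < b) (hd : 0 < d) :
    ∑ i ∈ Finset.range (p - j + 2), exp 1 ^ (j + i) * M (j + i) * b * d ^ i / i.factorial <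
      exp 1 ^ j * M j * b * exp (exp 1 * μ (p + 1) * d) := by
  have := hM j
  calc ∑ i ∈ Finset.range (p - j + 2), exp 1 ^ (j + i) * M (j + i) * b * d ^ i / i.factorial
      ≤ ∑ i ∈ Finset.range (p - j + 2),
          exp 1 ^ j * M j * b * ((exp 1 * μ (p + 1) * d) ^ i / i.factorial) := by
        refine Finset.sum_le_sum fun i hi => ?_
        have hMle := hMμ j i (by simp only [Finset.mem_range] at hi; omega)
        calc exp 1 ^ (j + i) * M (j + i) * b * d ^ i / i.factorial
            ≤ exp 1 ^ (j + i) * (M j * μ (p + 1) ^ i) * b * d ^ i / i.factorial := by gcongr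
          _ = _ := by ring
    _ = exp 1 ^ j * M j * b *
          ∑ i ∈ Finset.range (p - j + 2), (exp 1 * μ (p + 1) * d) ^ i / i.factorial :=
        (Finset.mul_sum _ _ _).symm
    _ < exp 1 ^ j * M j * b * exp (exp 1 * μ (p + 1) * d) := by
        gcongr
        exact sum_range_pow_div_factorial_lt_exp (by positivity) _

lemma scaledDeriv_lt_of_le (hM : ∀ j, 0 < M j)
    (hMμ : ∀ j i, j + i ≤ p + 1 → M (j + i) ≤ M j * μ (p + 1) ^ i) (hμ : 0 < μ (p + 1))
    (hf : ∀ u ∈ Icc x y, ContDiffAt ℝ N f u)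
    (hbd : ∀ j ≤ N, ∀ u ∈ Icc x y, |iteratedDeriv j f u| ≤ M j)
    (hpN : p + 1 ≤ N) (hs : s ∈ Icc x y) (ht : t ∈ Icc x y) (hst : s ≠ t)
    {j : ℕ} (hnj : n ≤ j) (hjp : j ≤ p) :
    scaledDeriv f M j t <
      max (bFun f M N n s) (exp (-(p + 1))) * exp (exp 1 * μ (p + 1) * |s - t|) := by
  set b := max (bFun f M N n s) (exp (-(p + 1)))
  have hb : 0 < b := lt_max_of_lt_right (exp_pos _)
  have hsub : uIcc s t ⊆ Icc x y := uIcc_subset_Icc hs ht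
  have hA : ∀ i ≤ p - j,
      |iteratedDeriv i (iteratedDeriv j f) s| ≤ exp 1 ^ (j + i) * M (j + i) * b := by
    intro i hi
    rw [iteratedDeriv_iteratedDeriv, add_comm i]
    exact abs_iteratedDeriv_le (hM _) ((le_bFun (by omega) (by omega)).trans (le_max_left _ _))
  have hA' : ∀ u ∈ uIcc s t, |iteratedDeriv (p - j + 1) (iteratedDeriv j f) u| ≤
      exp 1 ^ (j + (p - j + 1)) * M (j + (p - j + 1)) * b := by
    intro u hu
    rw [iteratedDeriv_iteratedDeriv, show p - j + 1 + j = p + 1 by omega,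
      show j + (p - j + 1) = p + 1 by omega]
    refine abs_iteratedDeriv_le (hM _) <|
      (scaledDeriv_le_exp_neg (hM _) (hbd _ hpN u (hsub hu))).trans ?_
    exact le_of_eq_of_le (by push_cast; ring_nf) (le_max_right _ _)
  have htaylor := abs_le_sum_taylor (fun u hu => (hf u (hsub hu)).iteratedDeriv_right
    (by norm_cast; omega)) hA hA'
  rw [abs_sub_comm] at htaylor
  have hlt := htaylor.trans_lt <|
    sum_taylor_weights_lt hM hMμ hμ hjp hb (abs_pos.2 (sub_ne_zero.2 hst))
  rw [scaledDeriv, div_lt_iff₀ (by have := hM j; positivity)]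
  linarith

lemma bFun_lt_mul_exp (hM : ∀ j, 0 < M j)
    (hMμ : ∀ j i, j + i ≤ p + 1 → M (j + i) ≤ M j * μ (p + 1) ^ i) (hμ : 0 < μ (p + 1))
    (hf : ∀ u ∈ Icc x y, ContDiffAt ℝ N f u)
    (hbd : ∀ j ≤ N, ∀ u ∈ Icc x y, |iteratedDeriv j f u| ≤ M j)
    (hn : n ≤ N) (hpN : p + 1 ≤ N) (hs : s ∈ Icc x y) (ht : t ∈ Icc x y) (hst : s ≠ t) :
    bFun f M N n t <
      max (bFun f M N n s) (exp (-(p + 1))) * exp (exp 1 * μ (p + 1) * |s - t|) := by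
  refine (bFun_lt_iff hn).2 fun j hj => ?_
  obtain ⟨hnj, hjN⟩ := Finset.mem_Icc.1 hj
  rcases le_or_gt j p with hjp | hpj
  · exact scaledDeriv_lt_of_le hM hMμ hμ hf hbd hpN hs ht hst hnj hjp
  have hz : 0 < exp 1 * μ (p + 1) * |s - t| := by
    have := abs_pos.2 (sub_ne_zero.2 hst); positivity
  calc scaledDeriv f M j t ≤ exp (-j) := scaledDeriv_le_exp_neg (hM j) (hbd j hjN t ht)
    _ ≤ exp (-(p + 1)) := exp_le_exp.2 (neg_le_neg (by exact_mod_cast hpj))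
    _ ≤ max (bFun f M N n s) (exp (-(p + 1))) := le_max_right _ _
    _ < _ := lt_mul_of_one_lt_right (lt_max_of_lt_right (exp_pos _)) (one_lt_exp_iff.2 hz)

end Growth

noncomputable def potential (μ : ℕ → ℝ) (m : ℕ) (c : ℝ) : ℝ :=
  (exp 1)⁻¹ * ∑ i ∈ Finset.Icc 1 (m + 1), max 0 (min 1 (i - c)) / μ i

section Potential

variable {μ : ℕ → ℝ} {m : ℕ}

lemma potential_antitone (hμ : ∀ j, 1 ≤ j → 0 < μ j) : Antitone (potential μ m) := by
  intro c c' h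
  unfold potential
  gcongr with i hi
  exact (hμ i (Finset.mem_Icc.1 hi).1).le

lemma potential_eq_zero {c : ℝ} (hc : m + 1 ≤ c) : potential μ m c = 0 := by
  refine mul_eq_zero_of_right _ (Finset.sum_eq_zero fun i hi => ?_)
  have : (i : ℝ) ≤ m + 1 := by exact_mod_cast (Finset.mem_Icc.1 hi).2
  rw [max_eq_left (min_le_of_right_le (by linarith)), zero_div]

lemma potential_natCast (k : ℕ) :
    potential μ m k = (exp 1)⁻¹ * ∑ i ∈ Finset.Ioc k (m + 1), 1 / μ i := by
  have hclamp : ∀ i : ℕ, max 0 (min 1 ((i : ℝ) - k)) = if k < i then 1 else 0 := by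
    intro i
    split_ifs with h
    · have : (k : ℝ) + 1 ≤ i := by exact_mod_cast h
      rw [min_eq_left (by linarith), max_eq_right zero_le_one]
    · have : (i : ℝ) ≤ k := by exact_mod_cast not_lt.1 h
      rw [max_eq_left (min_le_of_right_le (by linarith))]
  have hIoc : Finset.Ioc k (m + 1) = (Finset.Icc 1 (m + 1)).filter (k < ·) := by
    ext i
    simp only [Finset.mem_Ioc, Finset.mem_filter, Finset.mem_Icc]
    omega
  simp only [potential, hclamp, ite_div, zero_div, ← Finset.sum_filter, hIoc]

lemma potential_sub_potential {p : ℕ} {c c' : ℝ} (hpm : p ≤ m) (hpc : p ≤ c)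
    (hcc' : c ≤ c') (hc'p : c' ≤ p + 1) :
    potential μ m c - potential μ m c' = (c' - c) / (exp 1 * μ (p + 1)) := by
  have hterm : ∀ i ∈ Finset.Icc 1 (m + 1),
      max 0 (min 1 ((i : ℝ) - c)) / μ i - max 0 (min 1 ((i : ℝ) - c')) / μ i =
        if i = p + 1 then (c' - c) / μ (p + 1) else 0 := by
    intro i _
    split_ifs with h
    · subst h
      push_cast
      rw [min_eq_right (by linarith), max_eq_right (by linarith), min_eq_right (by linarith),
        max_eq_right (by linarith)]
      ring
    rcases Nat.lt_or_gt_of_ne h with h | h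
    · have : (i : ℝ) ≤ p := by exact_mod_cast Nat.lt_succ_iff.1 h
      rw [max_eq_left (min_le_of_right_le (by linarith)),
        max_eq_left (min_le_of_right_le (by linarith)), sub_self]
    · have : (p : ℝ) + 2 ≤ i := by exact_mod_cast h
      rw [min_eq_left (by linarith), min_eq_left (by linarith), sub_self]
  rw [potential, potential, ← mul_sub, ← Finset.sum_sub_distrib, Finset.sum_congr rfl hterm,
    Finset.sum_ite_eq', if_pos (Finset.mem_Icc.2 ⟨by omega, by omega⟩)]
  ring

end Potential

-- `-log b` capped at `m + 1`; the cap also covers `b ≤ 0`, where `log` is junk.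
noncomputable def level (m : ℕ) (b : ℝ) : ℝ :=
  if b ≤ exp (-(m + 1)) then m + 1 else -log b

section Level

variable {m : ℕ} {b c : ℝ}

lemma level_le : level m b ≤ m + 1 := by
  unfold level
  split_ifs with h
  · exact le_rfl
  · have hb : 0 < b := (exp_pos _).trans (not_le.1 h)
    have := (lt_log_iff_exp_lt hb).2 (not_le.1 h)
    linarith

lemma le_exp_neg_level : b ≤ exp (-level m b) := by
  unfold level
  split_ifs with h
  · exact h
  · rw [neg_neg, exp_log ((exp_pos _).trans (not_le.1 h))]

lemma exp_neg_level_le (h : level m b < m + 1) : exp (-level m b) ≤ b := by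
  unfold level at *
  split_ifs at * with hb
  · exact absurd h (lt_irrefl _)
  · rw [neg_neg, exp_log ((exp_pos _).trans (not_le.1 hb))]

lemma le_level (hc : c ≤ m + 1) (hb : b ≤ exp (-c)) : c ≤ level m b := by
  unfold level
  split_ifs with h
  · exact hc
  · have := (log_le_iff_le_exp ((exp_pos _).trans (not_le.1 h))).2 hb
    linarith

lemma level_le_of_exp_neg_le (hb : exp (-c) ≤ b) : level m b ≤ c := by
  unfold level
  split_ifs with h
  · have := exp_le_exp.1 (hb.trans h)
    linarith
  · have := (le_log_iff_exp_le ((exp_pos _).trans_le hb)).2 hb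
    linarith

end Level

section Crossing

variable {μ M : ℕ → ℝ} {f : ℝ → ℝ} {N m n p : ℕ} {x y s t c c' : ℝ}

lemma potential_sub_lt_of_le_succ (hM : ∀ j, 0 < M j)
    (hMμ : ∀ j i, j + i ≤ p + 1 → M (j + i) ≤ M j * μ (p + 1) ^ i) (hμ : 0 < μ (p + 1))
    (hf : ∀ u ∈ Icc x y, ContDiffAt ℝ N f u)
    (hbd : ∀ j ≤ N, ∀ u ∈ Icc x y, |iteratedDeriv j f u| ≤ M j)
    (hn : n ≤ N) (hpm : p ≤ m) (hmN : m + 1 ≤ N) (hs : s ∈ Icc x y) (ht : t ∈ Icc x y)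
    (hpc : p ≤ c) (hcc' : c < c') (hc'p : c' ≤ p + 1)
    (hbt : exp (-c) ≤ bFun f M N n t) (hbs : bFun f M N n s ≤ exp (-c')) :
    potential μ m c - potential μ m c' < |s - t| := by
  have hst : s ≠ t := by
    rintro rfl
    exact (exp_lt_exp.2 (neg_lt_neg hcc')).not_ge (hbt.trans hbs)
  have hgrowth : exp (-c) < exp (-c' + exp 1 * μ (p + 1) * |s - t|) :=
    calc exp (-c) ≤ bFun f M N n t := hbt
      _ < max (bFun f M N n s) (exp (-(p + 1))) * exp (exp 1 * μ (p + 1) * |s - t|) :=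
        bFun_lt_mul_exp hM hMμ hμ hf hbd hn (by omega) hs ht hst
      _ ≤ exp (-c') * exp (exp 1 * μ (p + 1) * |s - t|) := by
        gcongr
        exact max_le hbs (exp_le_exp.2 (by linarith))
      _ = _ := (exp_add _ _).symm
  rw [potential_sub_potential hpm hpc hcc'.le hc'p, div_lt_iff₀ (by positivity)]
  have := exp_lt_exp.1 hgrowth
  linarith

lemma potential_sub_lt (hM : ∀ j, 0 < M j)
    (hMμ : ∀ p j i, j + i ≤ p + 1 → M (j + i) ≤ M j * μ (p + 1) ^ i)
    (hμ : ∀ j, 1 ≤ j → 0 < μ j) (hf : ∀ u ∈ Icc x y, ContDiffAt ℝ N f u)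
    (hbd : ∀ j ≤ N, ∀ u ∈ Icc x y, |iteratedDeriv j f u| ≤ M j)
    (hn : n ≤ N) (hmN : m + 1 ≤ N) (hs : s ∈ Icc x y) (ht : t ∈ Icc x y)
    (hc : 0 ≤ c) (hcc' : c < c') (hc' : c' ≤ m + 1)
    (hbt : exp (-c) ≤ bFun f M N n t) (hbs : bFun f M N n s ≤ exp (-c')) :
    potential μ m c - potential μ m c' < |s - t| := by
  suffices H : ∀ k p : ℕ, ∀ c : ℝ, ∀ t ∈ Icc x y,
      p ≤ c → c < c' → c' ≤ p + 1 + k → exp (-c) ≤ bFun f M N n t →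
        potential μ m c - potential μ m c' < |s - t| from
    H m 0 c t ht (by simpa using hc) hcc' (by simpa [add_comm] using hc') hbt
  intro k
  induction k with
  | zero =>
    intro p c t ht hpc hcc' hc'p hbt
    have hpm : p ≤ m := Nat.lt_succ_iff.1 (by exact_mod_cast (show (p : ℝ) < m + 1 by linarith))
    exact potential_sub_lt_of_le_succ hM (hMμ p) (hμ _ p.succ_pos) hf hbd hn hpm hmN hs ht hpc
      hcc' (by simpa using hc'p) hbt hbs
  | succ k ih =>
    intro p c t ht hpc hcc' hc'p hbt
    have hpm : p ≤ m := Nat.lt_succ_iff.1 (by exact_mod_cast (show (p : ℝ) < m + 1 by linarith))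
    have hp1 : ((p + 1 : ℕ) : ℝ) = p + 1 := by push_cast; rfl
    by_cases hc'p1 : c' ≤ p + 1
    · exact potential_sub_lt_of_le_succ hM (hMμ p) (hμ _ p.succ_pos) hf hbd hn hpm hmN hs ht hpc
        hcc' hc'p1 hbt hbs
    by_cases hcp1 : p + 1 ≤ c
    · exact ih (p + 1) c t ht (hp1 ▸ hcp1) hcc' (by push_cast at hc'p ⊢; linarith) hbt
    push Not at hc'p1 hcp1
    obtain ⟨u, hu, hbu⟩ : ∃ u ∈ uIcc s t, bFun f M N n u = exp (-(p + 1)) :=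
      intermediate_value_uIcc ((continuousOn_bFun hn hf).mono (uIcc_subset_Icc hs ht))
        (Icc_subset_uIcc ⟨hbs.trans (exp_le_exp.2 (by linarith)),
          (exp_le_exp.2 (by linarith)).trans hbt⟩)
    have hu' : u ∈ Icc x y := uIcc_subset_Icc hs ht hu
    have hut := potential_sub_lt_of_le_succ hM (hMμ p) (hμ _ p.succ_pos) hf hbd hn hpm hmN hu' ht
      hpc hcp1 le_rfl hbt hbu.le
    have hsu := ih (p + 1) (p + 1) u hu' hp1.le hc'p1 (by push_cast at hc'p ⊢; linarith) hbu.ge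
    have hsplit : |s - u| + |u - t| = |s - t| := by
      have := dist_add_dist_of_mem_segment (segment_eq_uIcc s t ▸ hu)
      rwa [Real.dist_eq, Real.dist_eq, Real.dist_eq] at this
    linarith

lemma potential_level_sub_lt (hM : ∀ j, 0 < M j)
    (hMμ : ∀ p j i, j + i ≤ p + 1 → M (j + i) ≤ M j * μ (p + 1) ^ i)
    (hμ : ∀ j, 1 ≤ j → 0 < μ j) (hf : ∀ u ∈ Icc x y, ContDiffAt ℝ N f u)
    (hbd : ∀ j ≤ N, ∀ u ∈ Icc x y, |iteratedDeriv j f u| ≤ M j)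
    (hn : n ≤ m + 1) (hmN : m + 1 ≤ N) (hs : s ∈ Icc x y) (ht : t ∈ Icc x y)
    (h : level m (bFun f M N n t) < level m (bFun f M N n s)) :
    potential μ m (level m (bFun f M N n t)) - potential μ m (level m (bFun f M N n s)) <
      |t - s| := by
  have hnl : (n : ℝ) ≤ level m (bFun f M N n t) :=
    le_level (by exact_mod_cast hn) (bFun_le_exp_neg hM (by omega) fun j hj => hbd j hj t ht)
  rw [abs_sub_comm]
  exact potential_sub_lt hM hMμ hμ hf hbd (by omega) hmN hs ht ((Nat.cast_nonneg n).trans hnl) h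
    level_le (exp_neg_level_le (h.trans_le level_le)) le_exp_neg_level

lemma potential_level_sub_le (hM : ∀ j, 0 < M j)
    (hMμ : ∀ p j i, j + i ≤ p + 1 → M (j + i) ≤ M j * μ (p + 1) ^ i)
    (hμ : ∀ j, 1 ≤ j → 0 < μ j) (hf : ∀ u ∈ Icc x y, ContDiffAt ℝ N f u)
    (hbd : ∀ j ≤ N, ∀ u ∈ Icc x y, |iteratedDeriv j f u| ≤ M j)
    (hn : n ≤ m + 1) (hmN : m + 1 ≤ N) (hs : s ∈ Icc x y) (ht : t ∈ Icc x y) :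
    potential μ m (level m (bFun f M N n t)) - potential μ m (level m (bFun f M N n s)) ≤
      |t - s| := by
  rcases lt_or_ge (level m (bFun f M N n t)) (level m (bFun f M N n s)) with h | h
  · exact (potential_level_sub_lt hM hMμ hμ hf hbd hn hmN hs ht h).le
  · have := potential_antitone (m := m) hμ h
    linarith [abs_nonneg (t - s)]

lemma potential_level_le_sum (hM : ∀ j, 0 < M j)
    (hMμ : ∀ p j i, j + i ≤ p + 1 → M (j + i) ≤ M j * μ (p + 1) ^ i)
    (hμ : ∀ j, 1 ≤ j → 0 < μ j) (hf : ∀ u ∈ Icc x y, ContDiffAt ℝ N f u)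
    (hbd : ∀ j ≤ N, ∀ u ∈ Icc x y, |iteratedDeriv j f u| ≤ M j) (hmN : m + 1 ≤ N)
    {P : ℕ → ℝ} (hP : ∀ r ≤ m + 1, P r ∈ Icc x y)
    (hP0 : ∀ r ≤ m, iteratedDeriv r f (P (r + 1)) = 0) :
    potential μ m (level m (bFun f M N 0 (P 0))) ≤
        ∑ r ∈ Finset.range (m + 1), |P r - P (r + 1)| ∧
      (level m (bFun f M N 0 (P 0)) < m + 1 →
        potential μ m (level m (bFun f M N 0 (P 0))) <
          ∑ r ∈ Finset.range (m + 1), |P r - P (r + 1)|) := by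
  set ℓ : ℕ → ℝ := fun r => level m (bFun f M N r (P r))
  have hℓ : ∀ r < m + 1, level m (bFun f M N r (P (r + 1))) = ℓ (r + 1) := fun r hr => by
    simp only [ℓ, bFun_eq_bFun_succ (N := N) hM (by omega) (hP0 r (by omega))]
  have hend : ℓ (m + 1) = m + 1 := le_antisymm level_le <| le_level le_rfl <| by
    simpa using bFun_le_exp_neg hM hmN fun j hj => hbd j hj _ (hP _ le_rfl)
  obtain ⟨hle, hlt⟩ := sub_le_sum_of_chain (G := potential μ m) (ℓ := ℓ)
    (d := fun r => |P r - P (r + 1)|) (K := m + 1)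
    (fun r hr => hℓ r hr ▸ potential_level_sub_le hM hMμ hμ hf hbd (by omega) hmN
      (hP _ (by omega)) (hP r hr.le))
    (fun r hr h => hℓ r hr ▸ potential_level_sub_lt hM hMμ hμ hf hbd (by omega) hmN
      (hP _ (by omega)) (hP r hr.le) (hℓ r hr ▸ h))
  rw [hend, potential_eq_zero le_rfl, sub_zero] at hle hlt
  exact ⟨hle, hlt⟩

end Crossing

def consSeq (w : ℝ) (z : ℕ → ℝ) : ℕ → ℝ
  | 0 => w
  | r + 1 => z r

lemma sum_range_abs_sub_consSeq (w : ℝ) (z : ℕ → ℝ) (m : ℕ) :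
    ∑ r ∈ Finset.range (m + 1), |consSeq w z r - consSeq w z (r + 1)| =
      |w - z 0| + ∑ j ∈ Finset.Icc 1 m, |z (j - 1) - z j| := by
  rw [Finset.sum_range_succ', add_comm, ← Finset.Ico_add_one_right_eq_Icc,
    Finset.sum_Ico_eq_sum_range]
  simp [consSeq, add_comm 1]

lemma exp_neg_le_of_log_one_div_le {b c : ℝ} (hb : 0 < b) (h : log (1 / b) ≤ c) :
    exp (-c) ≤ b := by
  rw [one_div, log_inv] at h
  exact (le_log_iff_exp_le hb).1 (by linarith)

end Bang

open Bang in
theorem stmt1_general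
    (μ M : ℕ → ℝ)
    (hμpos : ∀ j, 1 ≤ j → 0 < μ j)
    (hμmono : ∀ j, 1 ≤ j → μ j ≤ μ (j + 1))
    (hM0 : 0 < M 0)
    (hMrec : ∀ j, M (j + 1) = M j * μ (j + 1))
    (x y : ℝ)
    (N : ℕ)
    (f : ℝ → ℝ)
    (hf : ∃ U : Set ℝ, IsOpen U ∧ Set.Icc x y ⊆ U ∧ ContDiffOn ℝ (N : ℕ∞) f U)
    (hbd : ∀ j ≤ N, ∀ t ∈ Set.Icc x y, |iteratedDeriv j f t| ≤ M j)
    (m : ℕ) (hm : m + 1 ≤ N)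
    (z : ℕ → ℝ) (hzmem : ∀ j ≤ m, z j ∈ Set.Icc x y)
    (hzzero : ∀ j ≤ m, iteratedDeriv j f (z j) = 0)
    (w : ℝ) (hw : w ∈ Set.Icc x y)
    (hb0pos : 0 < bFun f M N 0 w)
    (j0 : ℕ) (hj0 : j0 = sInf {j : ℕ | Real.log (1 / bFun f M N 0 w) ≤ (j : ℝ)}) :
    (1 / Real.exp 1) * ∑ j ∈ Finset.Ioc j0 (m + 1), 1 / μ j ≤
        |w - z 0| + ∑ j ∈ Finset.Icc 1 m, |z (j - 1) - z j| ∧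
    (j0 ≤ m →
      (1 / Real.exp 1) * ∑ j ∈ Finset.Ioc j0 (m + 1), 1 / μ j <
        |w - z 0| + ∑ j ∈ Finset.Icc 1 m, |z (j - 1) - z j|) := by
  obtain ⟨U, hU, hIU, hfU⟩ := hf
  have hf' : ∀ u ∈ Set.Icc x y, ContDiffAt ℝ N f u :=
    fun u hu => hfU.contDiffAt (hU.mem_nhds (hIU hu))
  have hstart : level m (bFun f M N 0 w) ≤ j0 :=
    level_le_of_exp_neg_le <| exp_neg_le_of_log_one_div_le hb0pos <|
      hj0 ▸ Nat.sInf_mem (exists_nat_ge (log (1 / bFun f M N 0 w)))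
  have hG := potential_antitone (m := m) hμpos hstart
  obtain ⟨hle, hlt⟩ := potential_level_le_sum (weight_pos hμpos hM0 hMrec)
    (fun _ _ _ => weight_add_le hμpos hμmono hM0 hMrec) hμpos hf' hbd hm (P := consSeq w z)
    (by rintro (_ | r) hr; exacts [hw, hzmem r (by omega)]) hzzero
  rw [sum_range_abs_sub_consSeq] at hle hlt
  rw [one_div, ← potential_natCast]
  refine ⟨hG.trans hle, fun hj0m => hG.trans_lt (hlt ?_)⟩
  exact hstart.trans_lt (by exact_mod_cast Nat.lt_succ_of_le hj0m)

/-- Bang's fundamental inequality. -/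
theorem stmt1
    (μ M : ℕ → ℝ)
    (hμpos : ∀ j, 1 ≤ j → 0 < μ j)
    (hμmono : ∀ j, 1 ≤ j → μ j ≤ μ (j + 1))
    (hM0 : 0 < M 0)
    (hMrec : ∀ j, M (j + 1) = M j * μ (j + 1))
    (x y : ℝ) (hxy : x < y)
    (N : ℕ) (hN : 1 ≤ N)
    (f : ℝ → ℝ)
    (hf : ∃ U : Set ℝ, IsOpen U ∧ Set.Icc x y ⊆ U ∧ ContDiffOn ℝ (N : ℕ∞) f U)
    (hbd : ∀ j ≤ N, ∀ t ∈ Set.Icc x y, |iteratedDeriv j f t| ≤ M j)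
    (m : ℕ) (hm : m + 1 ≤ N)
    (z : ℕ → ℝ) (hzmem : ∀ j ≤ m, z j ∈ Set.Icc x y)
    (hzzero : ∀ j ≤ m, iteratedDeriv j f (z j) = 0)
    (w : ℝ) (hw : w ∈ Set.Icc x y)
    (hb0pos : 0 < bFun f M N 0 w)
    (j0 : ℕ) (hj0 : j0 = sInf {j : ℕ | Real.log (1 / bFun f M N 0 w) ≤ (j : ℝ)}) :
    (1 / Real.exp 1) * ∑ j ∈ Finset.Ioc j0 (m + 1), 1 / μ j ≤
        |w - z 0| + ∑ j ∈ Finset.Icc 1 m, |z (j - 1) - z j| ∧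
    (j0 ≤ m →
      (1 / Real.exp 1) * ∑ j ∈ Finset.Ioc j0 (m + 1), 1 / μ j <
        |w - z 0| + ∑ j ∈ Finset.Icc 1 m, |z (j - 1) - z j|) :=
  stmt1_general μ M hμpos hμmono hM0 hMrec x y N f hf hbd m hm z hzmem hzzero w hw hb0pos j0 hj0
end

section
/- Let N ≥ 1 be an integer and f : I → ℝ of class C^N with ‖f^{(j)}‖_I ≤ M_j for all 0 ≤ j ≤ N. Let x_{−1} ∈ I with f(x_{−1}) ≠ 0, let 1 ≤ m ≤ N, and let x_0 ∈ I be an m-fold zero of f, i.e. f^{(i)}(x_0) = 0 for all 0 ≤ i ≤ m−1. Then |x_{−1} − x_0| ≥ (1/e)·Σ_{j=j_0+1}^{m} 1/μ_j, where j_0 := min{j ∈ ℕ : j ≥ log(M_0/|f(x_{−1})|)} (a sum over an empty index range being 0). -/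
/-!
Bang's argument. Call `a` a `k`-normalised point of `f` (`ScaledDerivBound M f k a`) when
`|f^{(j)}(a)| ≤ M_j e^{j-k}` for all `j ≤ k`; an `m`-fold zero is `m`-normalised. Expanding
`f^{(j)}` around a `k`-normalised point `a` to order `k - j` and using `M_{j+i} ≤ M_j μ_k^i` gives
`|f^{(j)}(b)| ≤ M_j e^{j-k} exp (e μ_k |b - a|)`, so a step of length `1/(e μ_k)` leads to a
`(k-1)`-normalised point. Walking from `x_0` towards `x_{-1}` with steps
`1/(e μ_m), 1/(e μ_{m-1}), …`, if `|x_{-1} - x_0| < Σ_{j_0 < k ≤ m} 1/(e μ_k)` we reach `x_{-1}`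
within a step of index `k > j_0`, whence `|f(x_{-1})| < M_0 e^{1-k} ≤ M_0 e^{-j_0}`, contradicting
the choice of `j_0`.
-/

open Set Finset Nat Real

theorem ContDiffAt.iteratedDeriv_right_s2 {f : ℝ → ℝ} {x : ℝ} {n m : WithTop ℕ∞} {i : ℕ}
    (hf : ContDiffAt ℝ n f x) (hmn : m + i ≤ n) : ContDiffAt ℝ m (iteratedDeriv i f) x := by
  have h : iteratedDeriv i f = fun y => iteratedFDeriv ℝ i f y fun _ => 1 :=
    funext fun _ => iteratedDeriv_eq_iteratedFDeriv
  rw [h]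
  exact (ContinuousMultilinearMap.apply ℝ (fun _ : Fin i => ℝ) ℝ fun _ => 1).contDiff.contDiffAt.comp
    x (hf.iteratedFDeriv_right hmn)

theorem iteratedDeriv_iteratedDeriv (i j : ℕ) (f : ℝ → ℝ) :
    iteratedDeriv i (iteratedDeriv j f) = iteratedDeriv (i + j) f := by
  simp only [iteratedDeriv_eq_iterate, Function.iterate_add_apply]

theorem abs_le_sum_of_abs_iteratedDeriv_le {g : ℝ → ℝ} {a b : ℝ} {n : ℕ} {c : ℕ → ℝ}
    (hg : ∀ t ∈ uIcc a b, ContDiffAt ℝ n g t) (ha : ∀ i < n, |iteratedDeriv i g a| ≤ c i)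
    (hb : ∀ t ∈ uIcc a b, |iteratedDeriv n g t| ≤ c n) :
    |g b| ≤ ∑ i ∈ range (n + 1), c i * |b - a| ^ i / i ! := by
  rcases n with _ | n
  · simpa using hb b right_mem_uIcc
  rcases eq_or_ne a b with rfl | hab
  · simpa [Finset.sum_range_succ'] using ha 0 n.succ_pos
  obtain ⟨t, ht, hrem⟩ := taylor_mean_remainder_lagrange_iteratedDeriv hab
    fun t ht => (hg t ht).contDiffWithinAt
  have htaylor : taylorWithinEval g n (uIcc a b) a b =
      ∑ i ∈ range (n + 1), iteratedDeriv i g a * (b - a) ^ i / i ! := by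
    rw [taylor_within_apply]
    refine Finset.sum_congr rfl fun i hi => ?_
    rw [iteratedDerivWithin_eq_iteratedDeriv (uniqueDiffOn_uIcc hab)
      ((hg a left_mem_uIcc).of_le (by exact_mod_cast (by have := Finset.mem_range.1 hi; omega))) left_mem_uIcc,
      smul_eq_mul]
    ring
  rw [htaylor, sub_eq_iff_eq_add] at hrem
  rw [hrem, Finset.sum_range_succ _ (n + 1), add_comm]
  refine (abs_add_le _ _).trans (add_le_add ?_ ?_)
  · refine (Finset.abs_sum_le_sum_abs _ _).trans (Finset.sum_le_sum fun i hi => ?_)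
    rw [abs_div, abs_mul, abs_pow, Nat.abs_cast]
    gcongr
    exact ha i (Finset.mem_range.1 hi)
  · rw [abs_div, abs_mul, abs_pow, Nat.abs_cast]
    gcongr
    exact hb t (uIoo_subset_uIcc_self ht)

def ScaledDerivBound (M : ℕ → ℝ) (f : ℝ → ℝ) (k : ℕ) (a : ℝ) : Prop :=
  ∀ j ≤ k, |iteratedDeriv j f a| ≤ M j * exp (j - k)

section ScaledDerivBound

variable {M : ℕ → ℝ} {f : ℝ → ℝ} {k : ℕ} {a b c : ℝ}

theorem ScaledDerivBound.abs_iteratedDeriv_le (ha : ScaledDerivBound M f k a) (hc : 0 ≤ c)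
    (hM : ∀ i j, j + i ≤ k → M (j + i) ≤ M j * c ^ i)
    (hf : ∀ t ∈ uIcc a b, ContDiffAt ℝ k f t) (hbd : ∀ t ∈ uIcc a b, |iteratedDeriv k f t| ≤ M k)
    {j : ℕ} (hj : j ≤ k) :
    |iteratedDeriv j f b| ≤ M j * exp (j - k) * exp (exp 1 * c * |b - a|) := by
  obtain ⟨n, rfl⟩ : ∃ n, k = j + n := ⟨k - j, by omega⟩
  have hMj : 0 ≤ M j * exp (j - (j + n : ℕ)) := (abs_nonneg _).trans (ha j hj)
  calc |iteratedDeriv j f b|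
      ≤ ∑ i ∈ range (n + 1), M (j + i) * exp ((j + i : ℕ) - (j + n : ℕ)) * |b - a| ^ i / i ! := by
        refine abs_le_sum_of_abs_iteratedDeriv_le (fun t ht => (hf t ht).iteratedDeriv_right_s2
          (by push_cast; rw [add_comm])) (fun i hi => ?_) (fun t ht => ?_)
        · rw [iteratedDeriv_iteratedDeriv, add_comm]
          exact ha (j + i) (by omega)
        · rw [iteratedDeriv_iteratedDeriv, add_comm, sub_self, exp_zero, mul_one]
          exact hbd t ht
    _ ≤ ∑ i ∈ range (n + 1), M j * exp (j - (j + n : ℕ)) * (exp 1 * c * |b - a|) ^ i / i ! := by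
        refine Finset.sum_le_sum fun i hi => ?_
        have hexp : exp ((j + i : ℕ) - (j + n : ℕ)) = exp (j - (j + n : ℕ)) * exp 1 ^ i := by
          rw [exp_one_pow, ← exp_add]
          push_cast
          ring_nf
        rw [hexp, mul_pow, mul_pow]
        gcongr ?_ / _
        calc M (j + i) * (exp (j - (j + n : ℕ)) * exp 1 ^ i) * |b - a| ^ i
            ≤ M j * c ^ i * (exp (j - (j + n : ℕ)) * exp 1 ^ i) * |b - a| ^ i := by
              gcongr
              exact hM i j (by have := Finset.mem_range.1 hi; omega)
          _ = _ := by ring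
    _ = M j * exp (j - (j + n : ℕ)) * ∑ i ∈ range (n + 1), (exp 1 * c * |b - a|) ^ i / i ! := by
        simp only [Finset.mul_sum, mul_div_assoc]
    _ ≤ M j * exp (j - (j + n : ℕ)) * exp (exp 1 * c * |b - a|) := by
        gcongr
        exact sum_le_exp_of_nonneg (by positivity) _

theorem ScaledDerivBound.of_abs_sub_le (ha : ScaledDerivBound M f (k + 1) a) (hc : 0 ≤ c)
    (hM : ∀ i j, j + i ≤ k + 1 → M (j + i) ≤ M j * c ^ i)
    (hf : ∀ t ∈ uIcc a b, ContDiffAt ℝ (k + 1) f t)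
    (hbd : ∀ t ∈ uIcc a b, |iteratedDeriv (k + 1) f t| ≤ M (k + 1))
    (hab : exp 1 * c * |b - a| ≤ 1) : ScaledDerivBound M f k b := by
  intro j hj
  have hMj : 0 ≤ M j * exp (j - (k + 1 : ℕ)) := (abs_nonneg _).trans (ha j (by omega))
  calc |iteratedDeriv j f b| ≤ M j * exp (j - (k + 1 : ℕ)) * exp (exp 1 * c * |b - a|) :=
        ha.abs_iteratedDeriv_le hc hM (by exact_mod_cast hf) hbd (by omega)
    _ ≤ M j * exp (j - (k + 1 : ℕ)) * exp 1 := by gcongr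
    _ = M j * exp (j - k) := by rw [mul_assoc, ← exp_add]; push_cast; ring_nf

theorem ScaledDerivBound.abs_lt_of_abs_sub_lt (ha : ScaledDerivBound M f k a) (hc : 0 ≤ c)
    (hM : ∀ i j, j + i ≤ k → M (j + i) ≤ M j * c ^ i)
    (hf : ∀ t ∈ uIcc a b, ContDiffAt ℝ k f t) (hbd : ∀ t ∈ uIcc a b, |iteratedDeriv k f t| ≤ M k)
    (hM0 : 0 < M 0) (hab : exp 1 * c * |b - a| < 1) : |f b| < M 0 * exp (1 - k) :=
  calc |f b| ≤ M 0 * exp (0 - k) * exp (exp 1 * c * |b - a|) := by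
        simpa using ha.abs_iteratedDeriv_le hc hM hf hbd (zero_le k)
    _ < M 0 * exp (0 - k) * exp 1 := by gcongr
    _ = M 0 * exp (1 - k) := by rw [mul_assoc, ← exp_add]; ring_nf

end ScaledDerivBound

theorem exists_mem_uIcc_abs_sub_eq {a b δ : ℝ} (hδ : 0 ≤ δ) (h : δ ≤ |b - a|) :
    ∃ c ∈ uIcc a b, |c - a| = δ ∧ |b - c| = |b - a| - δ := by
  rcases le_total a b with hab | hab
  · rw [abs_of_nonneg (sub_nonneg.2 hab)] at h ⊢
    refine ⟨a + δ, ?_, ?_, ?_⟩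
    · rw [uIcc_of_le hab]; constructor <;> linarith
    · rw [add_sub_cancel_left, abs_of_nonneg hδ]
    · rw [abs_of_nonneg (by linarith)]; ring
  · rw [abs_of_nonpos (sub_nonpos.2 hab)] at h ⊢
    refine ⟨a - δ, ?_, ?_, ?_⟩
    · rw [uIcc_of_ge hab]; constructor <;> linarith
    · rw [sub_sub_cancel_left, abs_neg, abs_of_nonneg hδ]
    · rw [abs_of_nonpos (by linarith)]; ring

theorem abs_lt_of_scaledDerivBound_of_abs_sub_lt_sum {μ M : ℕ → ℝ} {f : ℝ → ℝ} {s : Set ℝ}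
    {N l : ℕ} (hs : s.OrdConnected) (hμ : ∀ i, 1 ≤ i → 0 < μ i)
    (hM : ∀ i j k, j + i ≤ k → M (j + i) ≤ M j * μ k ^ i) (hM0 : 0 < M 0)
    (hf : ∀ t ∈ s, ContDiffAt ℝ N f t) (hbd : ∀ j ≤ N, ∀ t ∈ s, |iteratedDeriv j f t| ≤ M j)
    (k : ℕ) (hk : k ≤ N) {a b : ℝ} (ha : a ∈ s) (hb : b ∈ s) (haP : ScaledDerivBound M f k a)
    (hab : |b - a| < 1 / exp 1 * ∑ i ∈ Ioc l k, 1 / μ i) : |f b| < M 0 * exp (-l) := by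
  induction k generalizing a with
  | zero =>
    rw [Finset.Ioc_eq_empty (by omega), Finset.sum_empty, mul_zero] at hab
    exact absurd hab (abs_nonneg _).not_gt
  | succ k ih =>
    rcases lt_or_ge k l with hkl | hlk
    · rw [Finset.Ioc_eq_empty (by omega), Finset.sum_empty, mul_zero] at hab
      exact absurd hab (abs_nonneg _).not_gt
    have hsub : uIcc a b ⊆ s := hs.uIcc_subset ha hb
    have hμk := hμ (k + 1) (by omega)
    have hfk : ∀ t ∈ s, ContDiffAt ℝ (k + 1) f t :=
      fun t ht => (hf t ht).of_le (by exact_mod_cast hk)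
    set δ := 1 / exp 1 * (1 / μ (k + 1)) with hδdef
    have hδ : exp 1 * μ (k + 1) * δ = 1 := by rw [hδdef]; field_simp
    rw [Finset.sum_Ioc_succ_top hlk, mul_add] at hab
    rcases lt_or_ge |b - a| δ with hnear | hfar
    · calc |f b| < M 0 * exp (1 - (k + 1 : ℕ)) :=
            haP.abs_lt_of_abs_sub_lt hμk.le (hM · · _) (fun t ht => hfk t (hsub ht))
              (fun t ht => hbd _ hk t (hsub ht)) hM0
              ((mul_lt_mul_of_pos_left hnear (by positivity)).trans_eq hδ)
        _ ≤ M 0 * exp (-l) := by gcongr; push_cast; linarith [(Nat.cast_le (α := ℝ)).2 hlk]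
    · obtain ⟨a', ha', hδa, hδb⟩ := exists_mem_uIcc_abs_sub_eq (by positivity) hfar
      have hsub' : uIcc a a' ⊆ s := hs.uIcc_subset ha (hsub ha')
      exact ih (by omega) (hsub ha')
        (haP.of_abs_sub_le hμk.le (hM · · _) (fun t ht => hfk t (hsub' ht))
          (fun t ht => hbd _ hk t (hsub' ht)) (by rw [hδa, hδ]))
        (by rw [hδb]; linarith)

theorem pos_of_mul_succ {μ M : ℕ → ℝ} (hμpos : ∀ j, 1 ≤ j → 0 < μ j) (hM0 : 0 < M 0)
    (hMrec : ∀ j, M (j + 1) = M j * μ (j + 1)) (j : ℕ) : 0 < M j := by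
  induction j with
  | zero => exact hM0
  | succ j ih => rw [hMrec]; exact mul_pos ih (hμpos _ j.succ_pos)

theorem le_mul_pow_of_mul_succ {μ M : ℕ → ℝ} (hμpos : ∀ j, 1 ≤ j → 0 < μ j)
    (hμmono : ∀ j, 1 ≤ j → μ j ≤ μ (j + 1)) (hM0 : 0 < M 0)
    (hMrec : ∀ j, M (j + 1) = M j * μ (j + 1)) (i j k : ℕ) (hk : j + i ≤ k) :
    M (j + i) ≤ M j * μ k ^ i := by
  induction i with
  | zero => simp
  | succ i ih =>
    have hmono : μ (j + i + 1) ≤ μ k :=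
      monotoneOn_nat_Ici_of_le_succ hμmono (show 1 ≤ j + i + 1 by omega) (show 1 ≤ k by omega)
        (by omega)
    rw [← add_assoc, hMrec, pow_succ, ← mul_assoc]
    exact mul_le_mul (ih (by omega)) hmono (hμpos _ (by omega)).le
      (mul_nonneg (pos_of_mul_succ hμpos hM0 hMrec j).le (pow_nonneg (hμpos k (by omega)).le _))

theorem mul_exp_neg_sInf_le {A B : ℝ} (hA : 0 < A) (hB : 0 < B) :
    B * exp (-(sInf {j : ℕ | log (B / A) ≤ (j : ℝ)} : ℕ)) ≤ A := by
  have hj : log (B / A) ≤ (sInf {j : ℕ | log (B / A) ≤ (j : ℝ)} : ℕ) :=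
    Nat.sInf_mem (s := {j : ℕ | log (B / A) ≤ (j : ℝ)}) ⟨⌈log (B / A)⌉₊, Nat.le_ceil (log (B / A))⟩
  rw [log_le_iff_le_exp (div_pos hB hA), div_le_iff₀ hA] at hj
  rw [exp_neg, ← div_eq_mul_inv, div_le_iff₀ (exp_pos _), mul_comm A]
  exact hj

theorem stmt2_general
    (μ M : ℕ → ℝ)
    (hμpos : ∀ j, 1 ≤ j → 0 < μ j)
    (hμmono : ∀ j, 1 ≤ j → μ j ≤ μ (j + 1))
    (hM0 : 0 < M 0)
    (hMrec : ∀ j, M (j + 1) = M j * μ (j + 1))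
    (x y : ℝ)
    (N : ℕ)
    (f : ℝ → ℝ)
    (hf : ∃ U : Set ℝ, IsOpen U ∧ Set.Icc x y ⊆ U ∧ ContDiffOn ℝ (N : ℕ∞) f U)
    (hbd : ∀ j ≤ N, ∀ t ∈ Set.Icc x y, |iteratedDeriv j f t| ≤ M j)
    (w : ℝ) (hw : w ∈ Set.Icc x y) (hfw : f w ≠ 0)
    (m : ℕ) (hmN : m ≤ N)
    (z0 : ℝ) (hz0 : z0 ∈ Set.Icc x y)
    (hzero : ∀ i < m, iteratedDeriv i f z0 = 0)
    (j0 : ℕ) (hj0 : j0 = sInf {j : ℕ | Real.log (M 0 / |f w|) ≤ (j : ℝ)}) :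
    (1 / Real.exp 1) * ∑ j ∈ Finset.Ioc j0 m, 1 / μ j ≤ |w - z0| := by
  obtain ⟨U, hU, hIU, hfU⟩ := hf
  have hfI : ∀ t ∈ Icc x y, ContDiffAt ℝ N f t :=
    fun t ht => hfU.contDiffAt (hU.mem_nhds (hIU ht))
  have hz0P : ScaledDerivBound M f m z0 := by
    intro j hj
    rcases hj.lt_or_eq with hj | rfl
    · rw [hzero j hj, abs_zero]
      exact (mul_pos (pos_of_mul_succ hμpos hM0 hMrec j) (exp_pos _)).le
    · simpa using hbd j hmN z0 hz0
  have hfw_low : M 0 * exp (-j0) ≤ |f w| := hj0 ▸ mul_exp_neg_sInf_le (abs_pos.2 hfw) hM0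
  by_contra! hfar
  exact (abs_lt_of_scaledDerivBound_of_abs_sub_lt_sum ordConnected_Icc hμpos
    (le_mul_pow_of_mul_succ hμpos hμmono hM0 hMrec) hM0 hfI hbd m hmN hz0 hw hz0P hfar).not_ge
    hfw_low

/-- lower bound for the distance from a point to an `m`-fold zero. -/
theorem stmt2
    (μ M : ℕ → ℝ)
    (hμpos : ∀ j, 1 ≤ j → 0 < μ j)
    (hμmono : ∀ j, 1 ≤ j → μ j ≤ μ (j + 1))
    (hM0 : 0 < M 0)
    (hMrec : ∀ j, M (j + 1) = M j * μ (j + 1))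
    (x y : ℝ) (hxy : x < y)
    (N : ℕ) (hN : 1 ≤ N)
    (f : ℝ → ℝ)
    (hf : ∃ U : Set ℝ, IsOpen U ∧ Set.Icc x y ⊆ U ∧ ContDiffOn ℝ (N : ℕ∞) f U)
    (hbd : ∀ j ≤ N, ∀ t ∈ Set.Icc x y, |iteratedDeriv j f t| ≤ M j)
    (w : ℝ) (hw : w ∈ Set.Icc x y) (hfw : f w ≠ 0)
    (m : ℕ) (hm1 : 1 ≤ m) (hmN : m ≤ N)
    (z0 : ℝ) (hz0 : z0 ∈ Set.Icc x y)
    (hzero : ∀ i < m, iteratedDeriv i f z0 = 0)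
    (j0 : ℕ) (hj0 : j0 = sInf {j : ℕ | Real.log (M 0 / |f w|) ≤ (j : ℝ)}) :
    (1 / Real.exp 1) * ∑ j ∈ Finset.Ioc j0 m, 1 / μ j ≤ |w - z0| :=
  stmt2_general μ M hμpos hμmono hM0 hMrec x y N f hf hbd w hw hfw m hmN z0 hz0 hzero j0 hj0
end

section
/- Let N ≥ 1 be an integer and f : I → ℝ of class C^N with ‖f^{(j)}‖_I ≤ M_j for all 0 ≤ j ≤ N. Let 1 ≤ m ≤ N and let z_1 ≤ z_2 ≤ ⋯ ≤ z_m be points of I listing some zeros of f with multiplicities, i.e. for every point z occurring exactly k times in the list one has f^{(i)}(z) = 0 for all 0 ≤ i ≤ k−1. Let x_{−1} ∈ I with x_{−1} ∉ (z_1, z_m), set b_0(x_{−1}) := max_{0 ≤ j ≤ N} |f^{(j)}(x_{−1})|/(e^j·M_j), assume b_0(x_{−1}) > 0, and let j_0 := min{j ∈ ℕ : j ≥ log(1/b_0(x_{−1}))}. Then the length of I satisfies |I| > (1/e)·Σ_{j=j_0+1}^{m} 1/μ_j, and consequently m ≤ 𝔡_{|I|μ}(b_0(x_{−1})). -/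
/-!
Reflecting in `x ↦ -x` if necessary, let the base point `w` lie to the right of the zeros.
Rolle's theorem, applied with multiplicities, gives zeros `Y 0 ≥ Y 1 ≥ ⋯ ≥ Y (m-1)` of
`f, f', …, f^(m-1)`, all left of `w`. The function
`c τ = max_{l < m} |f^(l) (max τ (Y l))| / (e^l M_l)` is continuous, vanishes at `Y (m-1)`, and
`c w ≥ e^{-j₀}`. If `c u ≥ e^{-k}`, take `v ≤ u` with `c v = e^{-(k+1)}`: every `f^(l)` with
`l ≤ k` is small at its anchor `max v (Y l)`, and one of them is large at `u`. Integrating the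
chain `f^(k+1) → f^(k) → ⋯` upwards from these anchors bounds the normalised derivatives on
`[v, u]` by `e^{-(k+1)}` times a partial sum of the exponential series at `e μ_{k+1} (u - v)`;
such a partial sum stays below `e` at `1`, which forces `u - v > 1 / (e μ_{k+1})`. Descending
from `w` through the levels `e^{-j₀}, e^{-(j₀+1)}, …, e^{-m}` adds up these gaps.
-/

/-- `jZero b = min { j : ℕ | j ≥ log (1/b) }`. -/
noncomputable def jZero (b : ℝ) : ℕ := sInf {j : ℕ | Real.log (1 / b) ≤ (j : ℝ)}

/-- The `(aμ)`-degree `𝔡_{aμ}(b) = sup { n : ℕ | ∑_{j = jZero b + 1}^{n} 1/(a·μ_j) < e }`,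
as an element of `ℕ∞`. -/
noncomputable def bangDegree (μ : ℕ → ℝ) (a b : ℝ) : ℕ∞ :=
  sSup ((fun n : ℕ => (n : ℕ∞)) ''
    {n : ℕ | ∑ j ∈ Finset.Ioc (jZero b) n, 1 / (a * μ j) < Real.exp 1})

open Set Real

noncomputable def expPartialSum (n : ℕ) (u : ℝ) : ℝ :=
  ∑ i ∈ Finset.range (n + 1), u ^ i / i.factorial

@[simp]
theorem expPartialSum_zero (u : ℝ) : expPartialSum 0 u = 1 := by
  simp [expPartialSum]

theorem expPartialSum_succ (n : ℕ) (u : ℝ) :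
    expPartialSum (n + 1) u = expPartialSum n u + u ^ (n + 1) / (n + 1).factorial :=
  Finset.sum_range_succ _ _

theorem one_le_expPartialSum (n : ℕ) {u : ℝ} (hu : 0 ≤ u) : 1 ≤ expPartialSum n u := by
  induction n with
  | zero => simp
  | succ n ih =>
    rw [expPartialSum_succ]
    exact le_add_of_le_of_nonneg ih (by positivity)

theorem expPartialSum_le_expPartialSum (n : ℕ) {u v : ℝ} (hu : 0 ≤ u) (huv : u ≤ v) :
    expPartialSum n u ≤ expPartialSum n v := by
  unfold expPartialSum
  gcongr

theorem expPartialSum_one_lt_exp (n : ℕ) : expPartialSum n 1 < exp 1 := by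
  have h := sum_le_exp_of_nonneg zero_le_one (n + 2)
  rw [Finset.sum_range_succ] at h
  have : (0 : ℝ) < 1 ^ (n + 1) / (n + 1).factorial := by positivity
  unfold expPartialSum
  linarith

theorem hasDerivAt_pow_div_factorial (n : ℕ) (u : ℝ) :
    HasDerivAt (fun v : ℝ => v ^ (n + 1) / (n + 1).factorial) (u ^ n / n.factorial) u := by
  refine ((hasDerivAt_pow (n + 1) u).div_const _).congr_deriv ?_
  rw [Nat.factorial_succ, Nat.cast_mul, Nat.add_sub_cancel, mul_div_mul_left _ _ (by positivity)]

theorem hasDerivAt_expPartialSum (n : ℕ) (u : ℝ) :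
    HasDerivAt (expPartialSum (n + 1)) (expPartialSum n u) u := by
  induction n with
  | zero =>
    have : expPartialSum 1 = fun v => 1 + v := by ext v; simp [expPartialSum_succ]
    simpa [this] using (hasDerivAt_id u).const_add 1
  | succ n ih =>
    rw [funext (expPartialSum_succ (n + 1)), expPartialSum_succ]
    exact ih.add (hasDerivAt_pow_div_factorial (n + 1) u)

theorem abs_le_mul_expPartialSum_of_hasDerivAt {φ : ℕ → ℝ → ℝ} {c a : ℕ → ℝ} {X ε s t : ℝ}
    {n : ℕ} (hφ : ∀ i < n, ∀ τ ∈ Icc s t, HasDerivAt (φ (i + 1)) (c i * φ i τ) τ)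
    (hc : ∀ i < n, |c i| ≤ X) (h0 : ∀ τ ∈ Icc s t, |φ 0 τ| ≤ ε)
    (ha0 : s ≤ a 0) (ha : Monotone a)
    (hφa : ∀ i < n, |φ (i + 1) (a (i + 1))| ≤ ε) :
    ∀ i ≤ n, ∀ τ ∈ Icc (a i) t, |φ i τ| ≤ ε * expPartialSum i (X * (τ - s)) := by
  intro i hi
  induction i with
  | zero => intro τ hτ; simpa using h0 τ ⟨ha0.trans hτ.1, hτ.2⟩
  | succ i ih =>
    intro τ hτ
    have hsa : s ≤ a (i + 1) := ha0.trans (ha (Nat.zero_le _))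
    have hsub : Icc (a (i + 1)) t ⊆ Icc s t := Icc_subset_Icc_left hsa
    have hX : 0 ≤ X := (abs_nonneg _).trans (hc i hi)
    have hε : 0 ≤ ε := (abs_nonneg _).trans (h0 s ⟨le_rfl, hsa.trans (hτ.1.trans hτ.2)⟩)
    have hB : ∀ v, HasDerivAt (fun v => ε * expPartialSum (i + 1) (X * (v - s)))
        (ε * (expPartialSum i (X * (v - s)) * (X * 1))) v := fun v =>
      ((hasDerivAt_expPartialSum i _).comp v
        (((hasDerivAt_id v).sub_const s).const_mul X)).const_mul ε
    refine image_norm_le_of_norm_deriv_right_le_deriv_boundary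
      (fun v hv => (hφ i hi v (hsub hv)).continuousAt.continuousWithinAt)
      (fun v hv => (hφ i hi v (hsub (Ico_subset_Icc_self hv))).hasDerivWithinAt) ?_ hB ?_ hτ
    · calc ‖φ (i + 1) (a (i + 1))‖ ≤ ε := hφa i hi
        _ ≤ ε * expPartialSum (i + 1) (X * (a (i + 1) - s)) :=
          le_mul_of_one_le_right hε
            (one_le_expPartialSum _ (mul_nonneg hX (sub_nonneg.2 hsa)))
    · intro v hv
      rw [Real.norm_eq_abs, abs_mul]
      calc |c i| * |φ i v| ≤ X * (ε * expPartialSum i (X * (v - s))) :=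
            mul_le_mul (hc i hi) (ih (by omega) v ⟨(ha i.le_succ).trans hv.1, hv.2.le⟩)
              (abs_nonneg _) hX
        _ = ε * (expPartialSum i (X * (v - s)) * (X * 1)) := by ring

theorem one_lt_mul_sub_of_hasDerivAt {φ : ℕ → ℝ → ℝ} {c a : ℕ → ℝ} {X ε s t : ℝ}
    {n : ℕ} (hφ : ∀ i < n, ∀ τ ∈ Icc s t, HasDerivAt (φ (i + 1)) (c i * φ i τ) τ)
    (hc : ∀ i < n, |c i| ≤ X) (h0 : ∀ τ ∈ Icc s t, |φ 0 τ| ≤ ε)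
    (ha0 : s ≤ a 0) (ha : Monotone a)
    (hφa : ∀ i < n, |φ (i + 1) (a (i + 1))| ≤ ε)
    (hε : 0 < ε) (hat : a n ≤ t) (hφt : exp 1 * ε ≤ |φ n t|) :
    1 < X * (t - s) := by
  by_contra! hXt
  have hst : s ≤ t := (ha0.trans (ha (Nat.zero_le n))).trans hat
  have hE : expPartialSum n (X * (t - s)) ≤ expPartialSum n 1 := by
    cases n with
    | zero => simp
    | succ n =>
      exact expPartialSum_le_expPartialSum _
        (mul_nonneg ((abs_nonneg _).trans (hc 0 n.succ_pos)) (sub_nonneg.2 hst)) hXt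
  have := calc exp 1 * ε ≤ |φ n t| := hφt
    _ ≤ ε * expPartialSum n (X * (t - s)) :=
      abs_le_mul_expPartialSum_of_hasDerivAt hφ hc h0 ha0 ha hφa n le_rfl t ⟨hat, le_rfl⟩
    _ ≤ ε * expPartialSum n 1 := mul_le_mul_of_nonneg_left hE hε.le
    _ < ε * exp 1 := mul_lt_mul_of_pos_left (expPartialSum_one_lt_exp n) hε
  linarith

theorem sum_Ioc_lt_of_chain {P : ℕ → ℝ → Prop} {δ : ℕ → ℝ} {m : ℕ} {a : ℝ}
    (hstep : ∀ k < m, ∀ u, P k u → ∃ v, P (k + 1) v ∧ δ (k + 1) ≤ u - v)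
    (hend : ∀ v, P m v → a < v) {k : ℕ} (hk : k ≤ m) {u : ℝ} (hu : P k u) :
    ∑ i ∈ Finset.Ioc k m, δ i < u - a := by
  induction hk using Nat.decreasingInduction generalizing u with
  | self => simpa using hend u hu
  | of_succ k hk ih =>
    obtain ⟨v, hv, hδ⟩ := hstep k hk u hu
    rw [← Finset.Icc_add_one_left_eq_Ioc, Finset.Icc_eq_cons_Ioc hk, Finset.sum_cons]
    linarith [ih hv]

theorem ContDiffOn.hasDerivAt_iteratedDeriv {f : ℝ → ℝ} {U : Set ℝ} {N l : ℕ}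
    (hf : ContDiffOn ℝ (N : ℕ∞) f U) (hU : IsOpen U) (hl : l < N) {τ : ℝ} (hτ : τ ∈ U) :
    HasDerivAt (iteratedDeriv l f) (iteratedDeriv (l + 1) f τ) τ := by
  have hU' := hU.mem_nhds hτ
  have hdiff := (hf.differentiableOn_iteratedDerivWithin (by exact_mod_cast hl) hU.uniqueDiffOn
    τ hτ).differentiableAt hU'
  rw [iteratedDeriv_succ]
  exact (hdiff.congr_of_eventuallyEq
    (Filter.eventuallyEq_of_mem hU' (iteratedDerivWithin_of_isOpen hU)).symm).hasDerivAt

/-- `ζ 0 ≤ ⋯ ≤ ζ (n - 1)` lists zeros of `f^(p)` with multiplicity: a value repeated `r` times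
in a row is a zero of `f^(p), …, f^(p + r - 1)`. -/
structure ListsZerosOfDeriv (f : ℝ → ℝ) (p n : ℕ) (ζ : ℕ → ℝ) : Prop where
  monotoneOn : MonotoneOn ζ (Iio n)
  iteratedDeriv_eq_zero : ∀ ⦃i j⦄, i ≤ j → j < n → ζ i = ζ j →
    iteratedDeriv (p + (j - i)) f (ζ j) = 0

namespace ListsZerosOfDeriv

variable {f : ℝ → ℝ} {p n : ℕ} {ζ : ℕ → ℝ}

theorem mono (h : ListsZerosOfDeriv f p n ζ) {i j : ℕ} (hij : i ≤ j) (hj : j < n) :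
    ζ i ≤ ζ j :=
  h.monotoneOn (mem_Iio.2 (hij.trans_lt hj)) (mem_Iio.2 hj) hij

theorem eq_or_exists_iteratedDeriv_eq_zero (h : ListsZerosOfDeriv f p (n + 1) ζ)
    (hd : ∀ τ ∈ Icc (ζ 0) (ζ n), HasDerivAt (iteratedDeriv p f) (iteratedDeriv (p + 1) f τ) τ)
    {i : ℕ} (hi : i < n) :
    ζ i = ζ (i + 1) ∨ ∃ c ∈ Ioo (ζ i) (ζ (i + 1)), iteratedDeriv (p + 1) f c = 0 := by
  have hzero : ∀ i ≤ n, iteratedDeriv p f (ζ i) = 0 := fun i hi => by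
    simpa using h.iteratedDeriv_eq_zero le_rfl (Nat.lt_succ_of_le hi) rfl
  refine (h.mono i.le_succ (by omega)).eq_or_lt.imp id fun hlt => ?_
  have hsub : Icc (ζ i) (ζ (i + 1)) ⊆ Icc (ζ 0) (ζ n) :=
    Icc_subset_Icc (h.mono (Nat.zero_le _) (by omega)) (h.mono hi (by omega))
  exact exists_hasDerivAt_eq_zero hlt
    (fun τ hτ => (hd τ (hsub hτ)).continuousAt.continuousWithinAt)
    (by rw [hzero i hi.le, hzero (i + 1) hi]) fun τ hτ => hd τ (hsub (Ioo_subset_Icc_self hτ))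

theorem exists_interlacing (h : ListsZerosOfDeriv f p (n + 1) ζ)
    (hd : ∀ τ ∈ Icc (ζ 0) (ζ n), HasDerivAt (iteratedDeriv p f) (iteratedDeriv (p + 1) f τ) τ) :
    ∃ ζ' : ℕ → ℝ, ListsZerosOfDeriv f (p + 1) n ζ' ∧ ∀ i < n, ζ i ≤ ζ' i ∧ ζ' i ≤ ζ (i + 1) := by
  have hpt : ∀ i < n, ∃ c, (ζ i < c ∧ c < ζ (i + 1) ∧ iteratedDeriv (p + 1) f c = 0) ∨
      (c = ζ i ∧ ζ i = ζ (i + 1)) := fun i hi => by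
    rcases h.eq_or_exists_iteratedDeriv_eq_zero hd hi with heq | ⟨c, hc, hc0⟩
    · exact ⟨ζ i, Or.inr ⟨rfl, heq⟩⟩
    · exact ⟨c, Or.inl ⟨hc.1, hc.2, hc0⟩⟩
  choose! ζ' hζ' using hpt
  have hbetween : ∀ i < n, ζ i ≤ ζ' i ∧ ζ' i ≤ ζ (i + 1) := by
    intro i hi
    rcases hζ' i hi with ⟨h1, h2, -⟩ | ⟨h1, h2⟩
    · exact ⟨h1.le, h2.le⟩
    · exact ⟨h1.ge, (h1.trans h2).le⟩
  refine ⟨ζ', ⟨?_, ?_⟩, hbetween⟩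
  · intro i hi j hj hij
    rw [mem_Iio] at hi hj
    rcases hij.lt_or_eq with hlt | rfl
    · exact (hbetween i hi).2.trans ((h.mono hlt (by omega)).trans (hbetween j hj).1)
    · exact le_rfl
  · intro i j hij hj heq
    rcases hζ' j hj with ⟨hj1, hj2, hj0⟩ | ⟨hj1, hj2⟩
    · -- a Rolle point lies strictly between consecutive entries, so it is not repeated
      obtain rfl : i = j := by
        by_contra hne
        have := (hbetween i (by omega)).2.trans (h.mono (show i + 1 ≤ j by omega) (by omega))
        linarith
      simpa using hj0
    · rcases hζ' i (by omega) with ⟨-, hi2, -⟩ | ⟨hi1, hi2⟩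
      · have := h.mono (show i + 1 ≤ j + 1 by omega) (by omega)
        linarith
      · have := h.iteratedDeriv_eq_zero (show i ≤ j + 1 by omega) (by omega) (by linarith)
        rwa [hj1, hj2, show p + 1 + (j - i) = p + (j + 1 - i) by omega]

theorem exists_antitone_zeros (h : ListsZerosOfDeriv f p (n + 1) ζ)
    (hd : ∀ l < p + n, ∀ τ ∈ Icc (ζ 0) (ζ n),
      HasDerivAt (iteratedDeriv l f) (iteratedDeriv (l + 1) f τ) τ) :
    ∃ Y : ℕ → ℝ, Antitone Y ∧ (∀ q, Y q ∈ Icc (ζ 0) (ζ n)) ∧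
      ∀ q ≤ n, iteratedDeriv (p + q) f (Y q) = 0 := by
  induction n generalizing p ζ with
  | zero =>
    refine ⟨fun _ => ζ 0, antitone_const, fun _ => ⟨le_rfl, le_rfl⟩, fun q hq => ?_⟩
    obtain rfl : q = 0 := by omega
    simpa using h.iteratedDeriv_eq_zero le_rfl one_pos rfl
  | succ n ih =>
    obtain ⟨ζ', hζ', hbetween⟩ := h.exists_interlacing (hd p (by omega))
    have hsub : Icc (ζ' 0) (ζ' n) ⊆ Icc (ζ 0) (ζ (n + 1)) :=
      Icc_subset_Icc (hbetween 0 (by omega)).1 (hbetween n (by omega)).2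
    obtain ⟨Y, hY, hYmem, hYzero⟩ := ih hζ' (fun l hl τ hτ => hd l (by omega) τ (hsub hτ))
    refine ⟨fun | 0 => ζ (n + 1) | q + 1 => Y q, antitone_nat_of_succ_le ?_, ?_, ?_⟩
    · rintro (_ | q)
      · exact (hsub (hYmem 0)).2
      · exact hY q.le_succ
    · rintro (_ | q)
      · exact ⟨h.mono (Nat.zero_le _) (by omega), le_rfl⟩
      · exact hsub (hYmem q)
    · rintro (_ | q) hq
      · simpa using h.iteratedDeriv_eq_zero le_rfl (by omega) rfl
      · simpa [add_assoc, add_comm 1] using hYzero q (by omega)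

theorem comp_neg (h : ListsZerosOfDeriv f p n ζ) :
    ListsZerosOfDeriv (fun x => f (-x)) p n (fun i => -ζ (n - 1 - i)) where
  monotoneOn i _ j hj hij := neg_le_neg (h.mono (by omega) (by simp at hj; omega))
  iteratedDeriv_eq_zero i j hij hj heq := by
    have := h.iteratedDeriv_eq_zero (show n - 1 - j ≤ n - 1 - i by omega) (by omega)
      (neg_injective heq).symm
    rw [show n - 1 - i - (n - 1 - j) = j - i by omega] at this
    rw [iteratedDeriv_comp_neg, neg_neg, ← neg_injective heq, this, smul_zero]

end ListsZerosOfDeriv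

noncomputable def scaledDeriv (f : ℝ → ℝ) (M : ℕ → ℝ) (l : ℕ) (t : ℝ) : ℝ :=
  iteratedDeriv l f t / (exp 1 ^ l * M l)

section ScaledDeriv

variable {f : ℝ → ℝ} {μ M : ℕ → ℝ} {l : ℕ} {t : ℝ}

theorem abs_scaledDeriv (hM : 0 < M l) :
    |scaledDeriv f M l t| = |iteratedDeriv l f t| / (exp 1 ^ l * M l) := by
  rw [scaledDeriv, abs_div, abs_of_pos (by positivity : (0 : ℝ) < exp 1 ^ l * M l)]

theorem abs_scaledDeriv_le (hM : 0 < M l) (h : |iteratedDeriv l f t| ≤ M l) :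
    |scaledDeriv f M l t| ≤ exp (-l) := by
  rw [abs_scaledDeriv hM, div_le_iff₀ (by positivity), exp_one_pow, ← mul_assoc, ← exp_add,
    neg_add_cancel, exp_zero, one_mul]
  exact h

theorem le_of_exp_neg_le_abs_scaledDeriv {k : ℕ} (hM : 0 < M l)
    (h : |iteratedDeriv l f t| ≤ M l) (hk : exp (-k) ≤ |scaledDeriv f M l t|) : l ≤ k := by
  exact_mod_cast neg_le_neg_iff.1 (exp_le_exp.1 (hk.trans (abs_scaledDeriv_le hM h)))

theorem hasDerivAt_scaledDeriv (hM : 0 < M l) (hMrec : M (l + 1) = M l * μ (l + 1))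
    (hμ : 0 < μ (l + 1)) (h : HasDerivAt (iteratedDeriv l f) (iteratedDeriv (l + 1) f t) t) :
    HasDerivAt (scaledDeriv f M l) (exp 1 * μ (l + 1) * scaledDeriv f M (l + 1) t) t := by
  refine (h.div_const _).congr_deriv ?_
  rw [scaledDeriv, hMrec, pow_succ]
  field_simp

end ScaledDeriv

section Reflection

variable {f : ℝ → ℝ} {M : ℕ → ℝ} {l : ℕ} {τ : ℝ}

theorem abs_iteratedDeriv_comp_neg :
    |iteratedDeriv l (fun x => f (-x)) τ| = |iteratedDeriv l f (-τ)| := by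
  rw [iteratedDeriv_comp_neg, smul_eq_mul, abs_mul, abs_pow, abs_neg, abs_one, one_pow, one_mul]

theorem abs_scaledDeriv_comp_neg :
    |scaledDeriv (fun x => f (-x)) M l τ| = |scaledDeriv f M l (-τ)| := by
  simp only [scaledDeriv, abs_div, abs_iteratedDeriv_comp_neg]

theorem HasDerivAt.iteratedDeriv_comp_neg
    (h : HasDerivAt (iteratedDeriv l f) (iteratedDeriv (l + 1) f (-τ)) (-τ)) :
    HasDerivAt (iteratedDeriv l fun x => f (-x)) (iteratedDeriv (l + 1) (fun x => f (-x)) τ) τ := by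
  have := (h.comp τ (hasDerivAt_neg τ)).const_mul ((-1) ^ l)
  rw [funext (_root_.iteratedDeriv_comp_neg l f), _root_.iteratedDeriv_comp_neg]
  simp only [smul_eq_mul]
  exact this.congr_deriv (by ring)

end Reflection

theorem one_div_lt_sub_of_anchors {f : ℝ → ℝ} {μ M : ℕ → ℝ} (hM : ∀ l, 0 < M l)
    (hMrec : ∀ l, M (l + 1) = M l * μ (l + 1)) (hμ : MonotoneOn μ (Ici 1))
    {j k : ℕ} {v u : ℝ} {b : ℕ → ℝ} (hjk : j ≤ k)
    (hd : ∀ l ≤ k, ∀ τ ∈ Icc v u,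
      HasDerivAt (iteratedDeriv l f) (iteratedDeriv (l + 1) f τ) τ)
    (hbd : ∀ τ ∈ Icc v u, |iteratedDeriv (k + 1) f τ| ≤ M (k + 1))
    (hb : Antitone b) (hvb : ∀ l, v ≤ b l) (hbu : b j ≤ u)
    (hbε : ∀ l, j ≤ l → l ≤ k → |scaledDeriv f M l (b l)| ≤ exp (-(k + 1)))
    (hu : exp (-k) ≤ |scaledDeriv f M j u|) :
    1 / (exp 1 * μ (k + 1)) < u - v := by
  have hμpos : ∀ l, 0 < μ (l + 1) := fun l =>
    pos_of_mul_pos_right (hMrec l ▸ hM (l + 1)) (hM l).le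
  suffices 1 < exp 1 * μ (k + 1) * (u - v) by
    rw [div_lt_iff₀ (by have := hμpos k; positivity)]
    linarith
  have hj : k + 1 - (k + 1 - j) = j := by omega
  refine one_lt_mul_sub_of_hasDerivAt (φ := fun i => scaledDeriv f M (k + 1 - i))
    (c := fun i => exp 1 * μ (k + 1 - i)) (a := fun i => b (k + 1 - i)) (n := k + 1 - j)
    (ε := exp (-(k + 1)))
    ?_ ?_ ?_ (hvb _) (fun i i' h => hb (Nat.sub_le_sub_left h _)) ?_ (exp_pos _) ?_ ?_
  · intro i hi τ hτ
    have := hasDerivAt_scaledDeriv (hM _) (hMrec _) (hμpos _) (hd (k - i) (by omega) τ hτ)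
    rwa [show k - i + 1 = k + 1 - i by omega, ← show k + 1 - (i + 1) = k - i by omega] at this
  · intro i hi
    have := hμpos (k - i)
    rw [show k - i + 1 = k + 1 - i by omega] at this
    rw [abs_of_pos (by positivity)]
    gcongr
    exact hμ (by simp; omega) (by simp) (by omega)
  · intro τ hτ
    simpa using abs_scaledDeriv_le (hM _) (hbd τ hτ)
  · intro i hi
    simpa [show k + 1 - (i + 1) = k - i by omega] using hbε (k - i) (by omega) (by omega)
  · simpa only [hj] using hbu
  · rw [hj, ← exp_add]
    convert hu using 2
    ring

noncomputable def anchoredMax (f : ℝ → ℝ) (M Y : ℕ → ℝ) (n : ℕ) (τ : ℝ) : ℝ :=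
  (Finset.range (n + 1)).sup' Finset.nonempty_range_add_one
    fun l => |scaledDeriv f M l (max τ (Y l))|

section AnchoredMax

variable {f : ℝ → ℝ} {M Y : ℕ → ℝ} {n l : ℕ} {τ : ℝ}

theorem le_anchoredMax (hl : l ≤ n) : |scaledDeriv f M l (max τ (Y l))| ≤ anchoredMax f M Y n τ :=
  Finset.le_sup' (fun l => |scaledDeriv f M l (max τ (Y l))|) (Finset.mem_range_succ_iff.2 hl)

theorem exists_anchoredMax_eq (f : ℝ → ℝ) (M Y : ℕ → ℝ) (n : ℕ) (τ : ℝ) :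
    ∃ l ≤ n, anchoredMax f M Y n τ = |scaledDeriv f M l (max τ (Y l))| := by
  obtain ⟨l, hl, h⟩ := Finset.exists_mem_eq_sup' Finset.nonempty_range_add_one
    fun l => |scaledDeriv f M l (max τ (Y l))|
  exact ⟨l, Finset.mem_range_succ_iff.1 hl, h⟩

theorem anchoredMax_eq_zero (hY : Antitone Y) (hzero : ∀ q ≤ n, iteratedDeriv q f (Y q) = 0) :
    anchoredMax f M Y n (Y n) = 0 := by
  obtain ⟨l, hl, h⟩ := exists_anchoredMax_eq f M Y n (Y n)
  rw [h, max_eq_right (hY hl), scaledDeriv, hzero l hl, zero_div, abs_zero]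

theorem continuousOn_anchoredMax {a b : ℝ}
    (hcont : ∀ l ≤ n, ContinuousOn (iteratedDeriv l f) (Icc a b))
    (hY : ∀ l ≤ n, Y l ∈ Icc a b) : ContinuousOn (anchoredMax f M Y n) (Icc a b) := by
  refine ContinuousOn.finset_sup'_apply _ fun l hl => ?_
  have hl := Finset.mem_range_succ_iff.1 hl
  refine (((hcont l hl).div_const _).comp (continuous_id.max continuous_const).continuousOn ?_).abs
  exact fun τ hτ => ⟨hτ.1.trans (le_max_left _ _), max_le hτ.2 (hY l hl).2⟩

end AnchoredMax

theorem exists_lt_sub_of_exp_neg_le_anchoredMax {f : ℝ → ℝ} {μ M : ℕ → ℝ}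
    (hM : ∀ l, 0 < M l) (hMrec : ∀ l, M (l + 1) = M l * μ (l + 1)) (hμ : MonotoneOn μ (Ici 1))
    {N n i : ℕ} {Y : ℕ → ℝ} {a w u : ℝ} (hY : Antitone Y)
    (hYzero : ∀ q ≤ n, iteratedDeriv q f (Y q) = 0) (hYmem : ∀ q, Y q ∈ Icc a w)
    (hd : ∀ l ≤ n, ∀ τ ∈ Icc a w, HasDerivAt (iteratedDeriv l f) (iteratedDeriv (l + 1) f τ) τ)
    (hbd : ∀ l ≤ N, ∀ τ ∈ Icc a w, |iteratedDeriv l f τ| ≤ M l) (hnN : n < N)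
    (hi : i ≤ n) (hu : u ∈ Icc (Y n) w) (hcu : exp (-i) ≤ anchoredMax f M Y n u) :
    ∃ v ∈ Icc (Y n) u, anchoredMax f M Y n v = exp (-(i + 1 : ℕ)) ∧
      1 / (exp 1 * μ (i + 1)) < u - v := by
  have hdom : ∀ {v u}, Y n ≤ v → u ≤ w → Icc v u ⊆ Icc a w :=
    fun hv hu => Icc_subset_Icc ((hYmem n).1.trans hv) hu
  have hc : ContinuousOn (anchoredMax f M Y n) (Icc a w) := continuousOn_anchoredMax
    (fun l hl τ hτ => (hd l hl τ hτ).continuousAt.continuousWithinAt) fun l _ => hYmem l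
  have hlevel : exp (-(i + 1 : ℕ)) ∈ Icc (anchoredMax f M Y n (Y n)) (anchoredMax f M Y n u) :=
    ⟨(anchoredMax_eq_zero hY hYzero).trans_le (exp_pos _).le,
      (exp_le_exp.2 (by push_cast; linarith)).trans hcu⟩
  obtain ⟨v, hv, hcv⟩ := intermediate_value_Icc hu.1 (hc.mono (hdom le_rfl hu.2)) hlevel
  obtain ⟨j, hj, hcj⟩ := exists_anchoredMax_eq f M Y n u
  have hji : j ≤ i := le_of_exp_neg_le_abs_scaledDeriv (hM j)
    (hbd j (by omega) _ ⟨(hYmem j).1.trans (le_max_right _ _), max_le hu.2 (hYmem j).2⟩)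
    (hcj ▸ hcu)
  -- `f^(j)` vanishes at `Y j`, so it cannot realise the maximum there
  have hYju : Y j ≤ u := by
    by_contra! h
    rw [max_eq_right h.le, scaledDeriv, hYzero j hj, zero_div, abs_zero] at hcj
    linarith [exp_pos (-i)]
  refine ⟨v, hv, hcv, one_div_lt_sub_of_anchors hM hMrec hμ hji
    (fun l hl τ hτ => hd l (by omega) τ (hdom hv.1 hu.2 hτ))
    (fun τ hτ => hbd (i + 1) (by omega) τ (hdom hv.1 hu.2 hτ))
    (b := fun l => max v (Y l)) (fun l l' h => max_le_max le_rfl (hY h))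
    (fun l => le_max_left _ _) (max_le hv.2 hYju) (fun l _ hl => ?_) ?_⟩
  · have := le_anchoredMax (f := f) (M := M) (Y := Y) (τ := v) (show l ≤ n by omega)
    rw [hcv] at this
    exact_mod_cast this
  · rwa [← max_eq_left hYju, ← hcj]

theorem ListsZerosOfDeriv.sum_lt_sub_of_le {f : ℝ → ℝ} {μ M : ℕ → ℝ} (hM : ∀ l, 0 < M l)
    (hMrec : ∀ l, M (l + 1) = M l * μ (l + 1)) (hμ : MonotoneOn μ (Ici 1))
    {N n j k : ℕ} {ζ : ℕ → ℝ} {w : ℝ} (hζ : ListsZerosOfDeriv f 0 (n + 1) ζ)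
    (hd : ∀ l ≤ n, ∀ τ ∈ Icc (ζ 0) w,
      HasDerivAt (iteratedDeriv l f) (iteratedDeriv (l + 1) f τ) τ)
    (hbd : ∀ l ≤ N, ∀ τ ∈ Icc (ζ 0) w, |iteratedDeriv l f τ| ≤ M l) (hnN : n < N)
    (hζw : ζ n ≤ w) (hk : k ≤ n) (hjN : j ≤ N) (hjw : exp (-k) ≤ |scaledDeriv f M j w|) :
    1 / exp 1 * ∑ i ∈ Finset.Ioc k (n + 1), 1 / μ i < w - ζ 0 := by
  obtain ⟨Y, hY, hYmem, hYzero⟩ := hζ.exists_antitone_zeros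
    fun l hl τ hτ => hd l (by omega) τ ⟨hτ.1, hτ.2.trans hζw⟩
  simp only [zero_add] at hYzero
  have hYw : ∀ l, Y l ∈ Icc (ζ 0) w := fun l => ⟨(hYmem l).1, (hYmem l).2.trans hζw⟩
  set c := anchoredMax f M Y n
  have hstep : ∀ i < n + 1, ∀ u, u ∈ Icc (Y n) w ∧ exp (-i) ≤ c u →
      ∃ v, (v ∈ Icc (Y n) w ∧ exp (-(i + 1 : ℕ)) ≤ c v) ∧ 1 / (exp 1 * μ (i + 1)) ≤ u - v := by
    rintro i hi u ⟨hu, hcu⟩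
    obtain ⟨v, hv, hcv, hgap⟩ := exists_lt_sub_of_exp_neg_le_anchoredMax hM hMrec hμ hY hYzero
      hYw hd hbd hnN (by omega) hu hcu
    exact ⟨v, ⟨⟨hv.1, hv.2.trans hu.2⟩, hcv.ge⟩, hgap.le⟩
  have hend : ∀ v, v ∈ Icc (Y n) w ∧ exp (-(n + 1 : ℕ)) ≤ c v → Y n < v := by
    rintro v ⟨hv, hcv⟩
    refine hv.1.lt_of_ne ?_
    rintro rfl
    rw [show c (Y n) = 0 from anchoredMax_eq_zero hY hYzero] at hcv
    linarith [exp_pos (-(n + 1 : ℕ))]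
  have hstart : exp (-k) ≤ c w := by
    have hjk := le_of_exp_neg_le_abs_scaledDeriv (hM j)
      (hbd j hjN w ⟨(hYw 0).1.trans (hYw 0).2, le_rfl⟩) hjw
    calc exp (-k) ≤ |scaledDeriv f M j w| := hjw
      _ = |scaledDeriv f M j (max w (Y j))| := by rw [max_eq_left (hYw j).2]
      _ ≤ c w := le_anchoredMax (by omega)
  have := sum_Ioc_lt_of_chain (δ := fun i => 1 / (exp 1 * μ i)) hstep hend (by omega)
    ⟨⟨(hYw n).2, le_rfl⟩, hstart⟩
  rw [Finset.mul_sum]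
  simp only [one_div_mul_one_div]
  linarith [(hYw n).1]

theorem ListsZerosOfDeriv.sum_lt_sub_of_ge {f : ℝ → ℝ} {μ M : ℕ → ℝ} (hM : ∀ l, 0 < M l)
    (hMrec : ∀ l, M (l + 1) = M l * μ (l + 1)) (hμ : MonotoneOn μ (Ici 1))
    {N n j k : ℕ} {ζ : ℕ → ℝ} {w : ℝ} (hζ : ListsZerosOfDeriv f 0 (n + 1) ζ)
    (hd : ∀ l ≤ n, ∀ τ ∈ Icc w (ζ n),
      HasDerivAt (iteratedDeriv l f) (iteratedDeriv (l + 1) f τ) τ)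
    (hbd : ∀ l ≤ N, ∀ τ ∈ Icc w (ζ n), |iteratedDeriv l f τ| ≤ M l) (hnN : n < N) (hwζ : w ≤ ζ 0)
    (hk : k ≤ n) (hjN : j ≤ N) (hjw : exp (-k) ≤ |scaledDeriv f M j w|) :
    1 / exp 1 * ∑ i ∈ Finset.Ioc k (n + 1), 1 / μ i < ζ n - w := by
  have hneg : ∀ τ ∈ Icc (-ζ (n + 1 - 1 - 0)) (-w), -τ ∈ Icc w (ζ n) := fun τ hτ =>
    ⟨le_neg.1 hτ.2, by simpa using neg_le.1 hτ.1⟩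
  have := hζ.comp_neg.sum_lt_sub_of_le hM hMrec hμ (w := -w)
    (fun l hl τ hτ => (hd l hl (-τ) (hneg τ hτ)).iteratedDeriv_comp_neg)
    (fun l hl τ hτ => abs_iteratedDeriv_comp_neg.trans_le (hbd l hl (-τ) (hneg τ hτ)))
    hnN (by simpa using hwζ) hk hjN (by rwa [abs_scaledDeriv_comp_neg, neg_neg])
  simpa [sub_eq_add_neg, add_comm] using this

theorem ListsZerosOfDeriv.sum_lt_sub_of_notMem_Ioo {f : ℝ → ℝ} {μ M : ℕ → ℝ}
    (hM : ∀ l, 0 < M l) (hMrec : ∀ l, M (l + 1) = M l * μ (l + 1)) (hμ : MonotoneOn μ (Ici 1))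
    {N n j k : ℕ} {ζ : ℕ → ℝ} {x y w : ℝ}
    (hζ : ListsZerosOfDeriv f 0 (n + 1) ζ)
    (hd : ∀ l ≤ n, ∀ τ ∈ Icc x y, HasDerivAt (iteratedDeriv l f) (iteratedDeriv (l + 1) f τ) τ)
    (hbd : ∀ l ≤ N, ∀ τ ∈ Icc x y, |iteratedDeriv l f τ| ≤ M l)
    (hnN : n < N) (hx : x ≤ ζ 0) (hy : ζ n ≤ y) (hw : w ∈ Icc x y) (hwζ : w ∉ Ioo (ζ 0) (ζ n))
    (hk : k ≤ n) (hjN : j ≤ N) (hjw : exp (-k) ≤ |scaledDeriv f M j w|) :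
    1 / exp 1 * ∑ i ∈ Finset.Ioc k (n + 1), 1 / μ i < y - x := by
  rcases le_or_gt (ζ n) w with hζw | hwζn
  · have hsub : Icc (ζ 0) w ⊆ Icc x y := Icc_subset_Icc hx hw.2
    have := hζ.sum_lt_sub_of_le hM hMrec hμ (fun l hl τ hτ => hd l hl τ (hsub hτ))
      (fun l hl τ hτ => hbd l hl τ (hsub hτ)) hnN hζw hk hjN hjw
    linarith [hw.2]
  · have hsub : Icc w (ζ n) ⊆ Icc x y := Icc_subset_Icc hw.1 hy
    have := hζ.sum_lt_sub_of_ge hM hMrec hμ (fun l hl τ hτ => hd l hl τ (hsub hτ))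
      (fun l hl τ hτ => hbd l hl τ (hsub hτ)) hnN (not_lt.1 fun h => hwζ ⟨h, hwζn⟩) hk hjN hjw
    linarith [hw.1]

theorem listsZerosOfDeriv_of_card_filter {f : ℝ → ℝ} {m : ℕ} {z : ℕ → ℝ}
    (hzmono : ∀ i j, 1 ≤ i → i ≤ j → j ≤ m → z i ≤ z j)
    (hzmult : ∀ i, 1 ≤ i → i ≤ m →
      ∀ l < ((Finset.Icc 1 m).filter (fun i' => z i' = z i)).card, iteratedDeriv l f (z i) = 0) :
    ListsZerosOfDeriv f 0 m (fun i => z (i + 1)) where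
  monotoneOn i _ j hj hij := hzmono _ _ (by omega) (by omega) (by simp at hj; omega)
  iteratedDeriv_eq_zero i j hij hj heq := by
    refine (zero_add (j - i)).symm ▸ hzmult (j + 1) (by omega) (by omega) _ ?_
    have hsub : Finset.Icc (i + 1) (j + 1) ⊆
        (Finset.Icc 1 m).filter (fun i' => z i' = z (j + 1)) := by
      intro l hl
      simp only [Finset.mem_Icc, Finset.mem_filter] at hl ⊢
      refine ⟨⟨by omega, by omega⟩, le_antisymm (hzmono _ _ (by omega) hl.2 (by omega)) ?_⟩
      exact heq ▸ hzmono _ _ (by omega) hl.1 (by omega)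
    have := Finset.card_le_card hsub
    simp only [Nat.card_Icc] at this
    omega

theorem exp_neg_jZero_le {b : ℝ} (hb : 0 < b) : exp (-(jZero b)) ≤ b := by
  have hmem : log (1 / b) ≤ jZero b :=
    Nat.sInf_mem (s := {j : ℕ | log (1 / b) ≤ j}) (exists_nat_ge (log (1 / b)))
  rw [exp_neg, inv_le_comm₀ (exp_pos _) hb, ← one_div]
  exact (log_le_iff_le_exp (by positivity)).1 hmem

theorem exists_bFun_eq (f : ℝ → ℝ) (M : ℕ → ℝ) {N n : ℕ} (hn : n ≤ N) (t : ℝ) :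
    ∃ j ∈ Icc n N, bFun f M N n t = |iteratedDeriv j f t| / (exp 1 ^ j * M j) := by
  obtain ⟨j, hj, h⟩ := ((nonempty_Icc.2 hn).image _).csSup_mem ((finite_Icc n N).image
    fun j => |iteratedDeriv j f t| / (exp 1 ^ j * M j))
  exact ⟨j, hj, h.symm⟩

theorem le_bangDegree {μ : ℕ → ℝ} {a b : ℝ} {m : ℕ} (ha : 0 < a)
    (h : 1 / exp 1 * ∑ j ∈ Finset.Ioc (jZero b) m, 1 / μ j < a) :
    (m : ℕ∞) ≤ bangDegree μ a b := by
  refine le_sSup ⟨m, ?_, rfl⟩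
  rw [one_div_mul_eq_div, div_lt_iff₀ (exp_pos 1)] at h
  calc ∑ j ∈ Finset.Ioc (jZero b) m, 1 / (a * μ j)
      = (∑ j ∈ Finset.Ioc (jZero b) m, 1 / μ j) / a := by
        rw [Finset.sum_div]
        exact Finset.sum_congr rfl fun j _ => by rw [div_div, mul_comm]
    _ < exp 1 := by rw [div_lt_iff₀ ha]; linarith

theorem stmt3_general
    (μ M : ℕ → ℝ)
    (hμpos : ∀ j, 1 ≤ j → 0 < μ j)
    (hμmono : ∀ j, 1 ≤ j → μ j ≤ μ (j + 1))
    (hM0 : 0 < M 0)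
    (hMrec : ∀ j, M (j + 1) = M j * μ (j + 1))
    (x y : ℝ) (hxy : x < y)
    (N : ℕ)
    (f : ℝ → ℝ)
    (hf : ∃ U : Set ℝ, IsOpen U ∧ Set.Icc x y ⊆ U ∧ ContDiffOn ℝ (N : ℕ∞) f U)
    (hbd : ∀ j ≤ N, ∀ t ∈ Set.Icc x y, |iteratedDeriv j f t| ≤ M j)
    (m : ℕ) (hmN : m ≤ N)
    (z : ℕ → ℝ)
    (hzmem : ∀ i, 1 ≤ i → i ≤ m → z i ∈ Set.Icc x y)
    (hzmono : ∀ i j, 1 ≤ i → i ≤ j → j ≤ m → z i ≤ z j)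
    (hzmult : ∀ i, 1 ≤ i → i ≤ m →
      ∀ l < ((Finset.Icc 1 m).filter (fun i' => z i' = z i)).card,
        iteratedDeriv l f (z i) = 0)
    (w : ℝ) (hw : w ∈ Set.Icc x y) (hwout : w ∉ Set.Ioo (z 1) (z m))
    (hb0pos : 0 < bFun f M N 0 w)
    (j0 : ℕ) (hj0 : j0 = jZero (bFun f M N 0 w)) :
    (1 / Real.exp 1) * ∑ j ∈ Finset.Ioc j0 m, 1 / μ j < y - x ∧
    (m : ℕ∞) ≤ bangDegree μ (y - x) (bFun f M N 0 w) := by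
  subst hj0
  have hM : ∀ l, 0 < M l := fun l => by
    induction l with
    | zero => exact hM0
    | succ l ih => rw [hMrec]; exact mul_pos ih (hμpos _ l.succ_pos)
  obtain ⟨j, hj, hb⟩ := exists_bFun_eq f M (Nat.zero_le N) w
  have hlen : 1 / exp 1 * ∑ i ∈ Finset.Ioc (jZero (bFun f M N 0 w)) m, 1 / μ i < y - x := by
    rcases lt_or_ge (jZero (bFun f M N 0 w)) m with hk | hk
    · obtain ⟨n, rfl⟩ : ∃ n, m = n + 1 := ⟨m - 1, by omega⟩
      obtain ⟨U, hU, hxyU, hfU⟩ := hf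
      exact (listsZerosOfDeriv_of_card_filter hzmono hzmult).sum_lt_sub_of_notMem_Ioo hM hMrec
        (monotoneOn_nat_Ici_of_le_succ hμmono)
        (fun l hl τ hτ => hfU.hasDerivAt_iteratedDeriv hU (by omega) (hxyU hτ)) hbd (by omega)
        (hzmem 1 le_rfl (by omega)).1 (hzmem (n + 1) (by omega) le_rfl).2 hw hwout (by omega) hj.2
        (by rw [abs_scaledDeriv (hM j), ← hb]; exact exp_neg_jZero_le hb0pos)
    · simpa [Finset.Ioc_eq_empty_of_le hk] using hxy
  exact ⟨hlen, le_bangDegree (sub_pos.2 hxy) hlen⟩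

/-- lower bound for the length of the interval and
upper bound for the number of zeros. -/
theorem stmt3
    (μ M : ℕ → ℝ)
    (hμpos : ∀ j, 1 ≤ j → 0 < μ j)
    (hμmono : ∀ j, 1 ≤ j → μ j ≤ μ (j + 1))
    (hM0 : 0 < M 0)
    (hMrec : ∀ j, M (j + 1) = M j * μ (j + 1))
    (x y : ℝ) (hxy : x < y)
    (N : ℕ) (hN : 1 ≤ N)
    (f : ℝ → ℝ)
    (hf : ∃ U : Set ℝ, IsOpen U ∧ Set.Icc x y ⊆ U ∧ ContDiffOn ℝ (N : ℕ∞) f U)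
    (hbd : ∀ j ≤ N, ∀ t ∈ Set.Icc x y, |iteratedDeriv j f t| ≤ M j)
    (m : ℕ) (hm1 : 1 ≤ m) (hmN : m ≤ N)
    (z : ℕ → ℝ)
    (hzmem : ∀ i, 1 ≤ i → i ≤ m → z i ∈ Set.Icc x y)
    (hzmono : ∀ i j, 1 ≤ i → i ≤ j → j ≤ m → z i ≤ z j)
    (hzmult : ∀ i, 1 ≤ i → i ≤ m →
      ∀ l < ((Finset.Icc 1 m).filter (fun i' => z i' = z i)).card,
        iteratedDeriv l f (z i) = 0)
    (w : ℝ) (hw : w ∈ Set.Icc x y) (hwout : w ∉ Set.Ioo (z 1) (z m))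
    (hb0pos : 0 < bFun f M N 0 w)
    (j0 : ℕ) (hj0 : j0 = jZero (bFun f M N 0 w)) :
    (1 / Real.exp 1) * ∑ j ∈ Finset.Ioc j0 m, 1 / μ j < y - x ∧
    (m : ℕ∞) ≤ bangDegree μ (y - x) (bFun f M N 0 w) :=
  stmt3_general μ M hμpos hμmono hM0 hMrec x y hxy N f hf hbd m hmN z hzmem hzmono hzmult w hw hwout
    hb0pos j0 hj0
end

section
/- Assume Σ_{j=1}^{∞} 1/μ_j = ∞ (the weight is quasianalytic). Let f : I → ℝ be of class C^∞ such that there exists ρ > 0 with ‖f^{(j)}‖_I ≤ ρ^{j+1}·M_j for all j ∈ ℕ. If there exists a point x_0 ∈ I with f^{(j)}(x_0) = 0 for all j ∈ ℕ (i.e. the Taylor series of f at x_0 is identically zero), then f is identically zero on I. -/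
/-- Auxiliary predicate for Bang's proof: `z` is "good at level `n`". -/
def BangGood (f : ℝ → ℝ) (Mp : ℕ → ℝ) (n : ℕ) (z : ℝ) : Prop :=
  ∀ k ≤ n, |iteratedDeriv k f z| ≤ 1/4 * Mp k * 2^k / 2^n

/-- quasianalyticity — a function with controlled derivatives whose
Taylor series vanishes at one point vanishes identically. -/
theorem stmt5
    (μ M : ℕ → ℝ)
    (hμpos : ∀ j, 1 ≤ j → 0 < μ j)
    (hμmono : ∀ j, 1 ≤ j → μ j ≤ μ (j + 1))
    (hM0 : 0 < M 0)
    (hMrec : ∀ j, M (j + 1) = M j * μ (j + 1))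
    (hqa : ¬ Summable (fun j : ℕ => 1 / μ (j + 1)))
    (x y : ℝ) (hxy : x < y)
    (f : ℝ → ℝ)
    (hf : ∃ U : Set ℝ, IsOpen U ∧ Set.Icc x y ⊆ U ∧ ContDiffOn ℝ (⊤ : ℕ∞) f U)
    (hρ : ∃ ρ > (0 : ℝ), ∀ j : ℕ, ∀ t ∈ Set.Icc x y,
      |iteratedDeriv j f t| ≤ ρ ^ (j + 1) * M j)
    (x0 : ℝ) (hx0 : x0 ∈ Set.Icc x y)
    (hflat : ∀ j : ℕ, iteratedDeriv j f x0 = 0) :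
    ∀ t ∈ Set.Icc x y, f t = 0 := by
  obtain ⟨U, hUopen, hUsub, hfC⟩ := hf
  obtain ⟨ρ, hρpos, hbd⟩ := hρ
  have hMpos : ∀ k, 0 < M k := by
    intro k
    induction k with
    | zero => exact hM0
    | succ j ih => rw [hMrec]; exact mul_pos ih (hμpos (j+1) (Nat.le_add_left 1 j))
  set Mp : ℕ → ℝ := fun k => ρ ^ (k+1) * M k with hMpdef
  have hMppos : ∀ k, 0 < Mp k := fun k => mul_pos (pow_pos hρpos _) (hMpos k)
  have hMprec : ∀ k, Mp (k+1) = Mp k * (ρ * μ (k+1)) := by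
    intro k
    simp only [hMpdef]
    rw [hMrec]
    ring
  have hA : ∀ k, ∀ t ∈ Set.Icc x y, |iteratedDeriv k f t| ≤ Mp k := fun k t ht => hbd k t ht
  have hμle : ∀ j n : ℕ, 1 ≤ j → j ≤ n → μ j ≤ μ n := by
    intro j n hj hjn
    induction n, hjn using Nat.le_induction with
    | base => exact le_refl _
    | succ n hn ih => exact ih.trans (hμmono n (hj.trans hn))
  set δ : ℕ → ℝ := fun j => 1 / (16 * (ρ * μ j)) with hδdef
  have hδpos : ∀ j, 1 ≤ j → 0 < δ j := by
    intro j hj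
    have := hμpos j hj
    simp only [hδdef]
    positivity
  -- differentiability of iterated derivatives on U
  have hEqOn : ∀ k : ℕ, Set.EqOn (iteratedDerivWithin k f U) (iteratedDeriv k f) U := by
    intro k t ht
    rw [iteratedDerivWithin_eq_iteratedFDerivWithin, iteratedDeriv_eq_iteratedFDeriv,
      iteratedFDerivWithin_of_isOpen k hUopen ht]
  have hHD : ∀ (k : ℕ), ∀ t ∈ U, HasDerivAt (iteratedDeriv k f) (iteratedDeriv (k+1) f t) t := by
    intro k t ht
    have h1 : DifferentiableOn ℝ (iteratedDerivWithin k f U) U :=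
      hfC.differentiableOn_iteratedDerivWithin (by exact_mod_cast WithTop.coe_lt_top k)
        hUopen.uniqueDiffOn
    have h2 : DifferentiableAt ℝ (iteratedDerivWithin k f U) t :=
      (h1 t ht).differentiableAt (hUopen.mem_nhds ht)
    have heq : iteratedDeriv k f =ᶠ[nhds t] iteratedDerivWithin k f U :=
      Filter.eventuallyEq_of_mem (hUopen.mem_nhds ht) (fun a ha => (hEqOn k ha).symm)
    have h3 : DifferentiableAt ℝ (iteratedDeriv k f) t := h2.congr_of_eventuallyEq heq
    have h4 := h3.hasDerivAt
    rwa [← iteratedDeriv_succ] at h4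
  -- mean value inequality
  have hMVT : ∀ (k : ℕ) (a b : ℝ), a ∈ Set.Icc x y → b ∈ Set.Icc x y → ∀ C : ℝ,
      (∀ s ∈ Set.uIcc a b, |iteratedDeriv (k+1) f s| ≤ C) →
      |iteratedDeriv k f b - iteratedDeriv k f a| ≤ C * |b - a| := by
    intro k a b ha hb C hC
    have hsub : Set.uIcc a b ⊆ Set.Icc x y := Set.uIcc_subset_Icc ha hb
    have := (convex_uIcc a b).norm_image_sub_le_of_norm_hasDerivWithin_le
      (f := iteratedDeriv k f) (f' := iteratedDeriv (k+1) f)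
      (fun s hs => (hHD k s (hUsub (hsub hs))).hasDerivWithinAt)
      (fun s hs => hC s hs) Set.left_mem_uIcc Set.right_mem_uIcc
    simpa [Real.norm_eq_abs] using this
  -- the one-step propagation lemma
  have hstep : ∀ (m : ℕ) (z t : ℝ), z ∈ Set.Icc x y → t ∈ Set.Icc x y →
      |t - z| ≤ δ (m+1) → BangGood f Mp (m+1) z → BangGood f Mp m t := by
    intro m z t hz ht hdist hPz
    have hsub : Set.uIcc z t ⊆ Set.Icc x y := Set.uIcc_subset_Icc hz ht
    have h2m : (0:ℝ) < 2^m := by positivity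
    -- the core estimate
    have hcore : ∀ k : ℕ, k ≤ m → ∀ s ∈ Set.uIcc z t,
        (∀ u ∈ Set.uIcc z s, |iteratedDeriv (k+1) f u| ≤ Mp (k+1) * 2^(k+1) / 2^m) →
        |iteratedDeriv k f s| ≤ 1/4 * Mp k * 2^k / 2^m := by
      intro k hkm s hs hchain
      have h2k : (0:ℝ) < 2^k := by positivity
      have hsz : |s - z| ≤ |t - z| := by
        rcases Set.mem_uIcc.mp hs with ⟨h1, h2⟩ | ⟨h1, h2⟩
        · rw [abs_of_nonneg (by linarith), abs_of_nonneg (by linarith)]; linarith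
        · rw [abs_of_nonpos (by linarith), abs_of_nonpos (by linarith)]; linarith
      have hkeymul : δ (m+1) * Mp (k+1) ≤ Mp k / 16 := by
        have hμm : 0 < μ (m+1) := hμpos _ (by omega)
        have hμk : 0 < μ (k+1) := hμpos _ (by omega)
        have hle : μ (k+1) ≤ μ (m+1) := hμle (k+1) (m+1) (by omega) (by omega)
        have heq : δ (m+1) * Mp (k+1) = Mp k / 16 * (μ (k+1) / μ (m+1)) := by
          simp only [hδdef]
          rw [hMprec k]
          field_simp
        have hratio : μ (k+1) / μ (m+1) ≤ 1 := div_le_one_of_le₀ hle hμm.le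
        calc δ (m+1) * Mp (k+1) = Mp k / 16 * (μ (k+1) / μ (m+1)) := heq
          _ ≤ Mp k / 16 * 1 := by
              apply mul_le_mul_of_nonneg_left hratio
              have := hMppos k; linarith
          _ = Mp k / 16 := mul_one _
      set C := Mp (k+1) * 2^(k+1) / 2^m with hCdef
      have hCnn : (0:ℝ) ≤ C := by
        have := (hMppos (k+1)).le
        positivity
      have h1 : |iteratedDeriv k f s - iteratedDeriv k f z| ≤ C * |s - z| :=
        hMVT k z s hz (hsub hs) C hchain
      have htri : |iteratedDeriv k f s| ≤ |iteratedDeriv k f z| + C * |s - z| := by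
        have := abs_sub_abs_le_abs_sub (iteratedDeriv k f s) (iteratedDeriv k f z)
        linarith
      have h2 : |iteratedDeriv k f z| ≤ 1/4 * Mp k * 2^k / 2^(m+1) := hPz k (by omega)
      have h3 : C * |s - z| ≤ C * δ (m+1) :=
        mul_le_mul_of_nonneg_left (hsz.trans hdist) hCnn
      have h4 : C * δ (m+1) ≤ Mp k / 16 * (2^(k+1) / 2^m) := by
        have hCre : C * δ (m+1) = (δ (m+1) * Mp (k+1)) * (2^(k+1) / 2^m) := by
          rw [hCdef]; ring
        rw [hCre]
        apply mul_le_mul_of_nonneg_right hkeymul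
        positivity
      have hpow : (2:ℝ)^(m+1) = 2 * 2^m := by rw [pow_succ]; ring
      have hpk : (2:ℝ)^(k+1) = 2 * 2^k := by rw [pow_succ]; ring
      have heqf : 1/4 * Mp k * 2^k / 2^(m+1) + Mp k / 16 * ((2:ℝ)^(k+1) / 2^m)
          = 1/4 * Mp k * 2^k / 2^m := by
        rw [hpow, hpk]
        field_simp
        ring
      linarith
    -- the weak chain bound, by downward induction
    have hW : ∀ d k : ℕ, k + d = m + 1 → ∀ s ∈ Set.uIcc z t,
        |iteratedDeriv k f s| ≤ Mp k * 2^k / 2^m := by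
      intro d
      induction d with
      | zero =>
        intro k hk s hs
        have hk' : k = m + 1 := by omega
        subst hk'
        have h1 := hA (m+1) s (hsub hs)
        have h2 : Mp (m+1) * 2^(m+1) / 2^m = 2 * Mp (m+1) := by
          rw [pow_succ]; field_simp
        have := (hMppos (m+1)).le
        rw [h2]; linarith
      | succ d ih =>
        intro k hk s hs
        have hkm : k ≤ m := by omega
        have hchain : ∀ u ∈ Set.uIcc z s, |iteratedDeriv (k+1) f u| ≤ Mp (k+1) * 2^(k+1) / 2^m :=
          fun u hu => ih (k+1) (by omega) u (Set.uIcc_subset_uIcc Set.left_mem_uIcc hs hu)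
        have hc := hcore k hkm s hs hchain
        have h2k : (0:ℝ) < 2^k := by positivity
        have := (hMppos k).le
        have hnn : (0:ℝ) ≤ Mp k * 2^k / 2^m := by positivity
        have hqe : 1/4 * Mp k * 2^k / 2^m = 1/4 * (Mp k * 2^k / 2^m) := by ring
        linarith
    intro k hkm
    exact hcore k hkm t Set.right_mem_uIcc (fun u hu => hW (m - k) (k+1) (by omega) u hu)
  -- the walk lemma
  have hwalk : ∀ (d m : ℕ), ∀ z ∈ Set.Icc x y, BangGood f Mp (m+d) z →
      ∀ t' ∈ Set.Icc x y, |t' - z| ≤ ∑ i ∈ Finset.range d, δ (m+1+i) →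
      BangGood f Mp m t' := by
    intro d
    induction d with
    | zero =>
      intro m z hz hPz t' ht' hdist
      simp only [Finset.range_zero, Finset.sum_empty] at hdist
      have hzt : t' = z := by
        have h0 : |t' - z| = 0 := le_antisymm hdist (abs_nonneg _)
        have := abs_eq_zero.mp h0
        linarith [sub_eq_zero.mp this]
      rw [hzt]
      exact hPz
    | succ d ih =>
      intro m z hz hPz t' ht' hdist
      have hidx : m + 1 + d = m + d + 1 := by omega
      set D := δ (m + d + 1) with hDdef
      set S := ∑ i ∈ Finset.range d, δ (m+1+i) with hSdef
      have hDpos : 0 < D := hδpos _ (by omega)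
      have hSnn : 0 ≤ S := Finset.sum_nonneg (fun i _ => (hδpos _ (by omega)).le)
      have hdist' : |t' - z| ≤ S + D := by
        rw [Finset.sum_range_succ, hidx] at hdist
        linarith
      rcases le_total z t' with hzt | hzt
      · set z' := min (z + D) t' with hz'def
        have hz'1 : z ≤ z' := le_min (by linarith) hzt
        have hz'2 : z' ≤ t' := min_le_right _ _
        have hz'mem : z' ∈ Set.Icc x y := ⟨le_trans hz.1 hz'1, le_trans hz'2 ht'.2⟩
        have hstep1 : |z' - z| ≤ D := by
          rw [abs_of_nonneg (by linarith)]
          have : z' ≤ z + D := min_le_left _ _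
          linarith
        have hG : BangGood f Mp (m+d) z' := hstep (m+d) z z' hz hz'mem hstep1 hPz
        have habs1 : |t' - z| = t' - z := abs_of_nonneg (by linarith)
        have hrem : |t' - z'| ≤ S := by
          rw [abs_of_nonneg (by linarith)]
          rcases min_cases (z + D) t' with ⟨h1, h2⟩ | ⟨h1, h2⟩
          · rw [hz'def, h1]; rw [habs1] at hdist'; linarith
          · rw [hz'def, h1]; simpa using hSnn
        exact ih m z' hz'mem hG t' ht' hrem
      · set z' := max (z - D) t' with hz'def
        have hz'1 : z' ≤ z := max_le (by linarith) hzt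
        have hz'2 : t' ≤ z' := le_max_right _ _
        have hz'mem : z' ∈ Set.Icc x y := ⟨le_trans ht'.1 hz'2, le_trans hz'1 hz.2⟩
        have hstep1 : |z' - z| ≤ D := by
          rw [abs_of_nonpos (by linarith)]
          have : z - D ≤ z' := le_max_left _ _
          linarith
        have hG : BangGood f Mp (m+d) z' := hstep (m+d) z z' hz hz'mem hstep1 hPz
        have habs1 : |t' - z| = z - t' := by rw [abs_of_nonpos (by linarith)]; ring
        have hrem : |t' - z'| ≤ S := by
          rw [abs_of_nonpos (by linarith)]
          rcases max_cases (z - D) t' with ⟨h1, h2⟩ | ⟨h1, h2⟩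
          · rw [hz'def, h1]; rw [habs1] at hdist'; linarith
          · rw [hz'def, h1]; simpa using hSnn
        exact ih m z' hz'mem hG t' ht' hrem
  -- x0 is good at every level
  have hx0good : ∀ n : ℕ, BangGood f Mp n x0 := by
    intro n k hk
    rw [hflat k, abs_zero]
    have := (hMppos k).le
    positivity
  -- divergence of the series of steps
  have hδnn : ∀ i : ℕ, 0 ≤ δ (i+1) := fun i => (hδpos _ (by omega)).le
  have htend : Filter.Tendsto (fun n => ∑ i ∈ Finset.range n, δ (i+1))
      Filter.atTop Filter.atTop := by
    rw [← not_summable_iff_tendsto_nat_atTop_of_nonneg hδnn]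
    intro hsum
    apply hqa
    have h16 : Summable (fun j : ℕ => (16*ρ) * δ (j+1)) := hsum.mul_left _
    have hcongr : (fun j : ℕ => 1 / μ (j + 1)) = (fun j : ℕ => (16*ρ) * δ (j+1)) := by
      funext j
      have hμj : 0 < μ (j+1) := hμpos _ (by omega)
      simp only [hδdef]
      field_simp
    rw [hcongr]
    exact h16
  intro t ht
  have habs : ∀ m : ℕ, |f t| ≤ 1/4 * Mp 0 / 2^m := by
    intro m
    obtain ⟨n, hn1, hn2⟩ := ((htend.eventually_ge_atTop
      (|t - x0| + ∑ i ∈ Finset.range m, δ (i+1))).and (Filter.eventually_ge_atTop m)).exists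
    set d := n - m with hddef
    have hmd : m + d = n := by omega
    have hsum : ∑ i ∈ Finset.range n, δ (i+1)
        = ∑ i ∈ Finset.range m, δ (i+1) + ∑ i ∈ Finset.range d, δ (m+1+i) := by
      rw [← hmd, Finset.sum_range_add]
      congr 1
      exact Finset.sum_congr rfl (fun i _ => by rw [show m + i + 1 = m + 1 + i from by omega])
    have hdist : |t - x0| ≤ ∑ i ∈ Finset.range d, δ (m+1+i) := by
      rw [hsum] at hn1
      linarith
    have hGt : BangGood f Mp m t := hwalk d m x0 hx0 (hx0good (m+d)) t ht hdist
    have := hGt 0 (Nat.zero_le m)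
    simpa [iteratedDeriv_zero] using this
  have hlim : Filter.Tendsto (fun m : ℕ => 1/4 * Mp 0 / 2^m) Filter.atTop (nhds 0) := by
    have h1 := tendsto_pow_atTop_nhds_zero_of_lt_one (by norm_num : (0:ℝ) ≤ 1/2)
      (by norm_num : (1/2:ℝ) < 1)
    have h2 := h1.const_mul (1/4 * Mp 0)
    rw [mul_zero] at h2
    convert h2 using 2 with m
    rw [div_pow, one_pow]
    ring
  have hle0 : |f t| ≤ 0 := ge_of_tendsto hlim (Filter.Eventually.of_forall habs)
  have : |f t| = 0 := le_antisymm hle0 (abs_nonneg _)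
  exact abs_eq_zero.mp this
end
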